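/- arXiv:1712.04946 — 5 statements merged into one kernel-verified Lean document; each statement's English description precedes it below -/
import Mathlib

section
/- Let $R$ be a local commutative ring and $f_1, \ldots, f_n$ a regular sequence in the maximal ideal of $R$. If $J$ is an ideal generated by square-free monomials in $f_1, \ldots, f_{n-1}$ (i.e., products of distinct elements among $f_1,\ldots,f_{n-1}$), then the ideal quotient satisfies $(J : f_n) = J$. -/
open RingTheory.Sequence Pointwise


lemma sum_image_le' {α β : Type*} [DecidableEq α] [DecidableEq β] (s : Finset α) (f : α → β) (w : β → ℕ) :
    ∑ t ∈ s.image f, w t ≤ ∑ a ∈ s, w (f a) := by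
  induction s using Finset.induction_on with
  | empty => simp
  | insert _ _ h ih =>
    rename_i a s'
    rw [Finset.image_insert, Finset.sum_insert h]
    by_cases hfa : f a ∈ s'.image f
    · rw [Finset.insert_eq_self.mpr hfa]; omega
    · rw [Finset.sum_insert hfa]; omega

lemma quot_weaklyRegular {R : Type*} [CommRing R] (r : R) (l : List R)
    (H : IsWeaklyRegular R (r :: l)) :
    IsWeaklyRegular (R ⧸ Ideal.span {r}) (l.map (Ideal.Quotient.mk (Ideal.span {r}))) := by
  rw [isWeaklyRegular_cons_iff] at H
  have heq : (r • ⊤ : Submodule R R) = (Ideal.span {r} : Ideal R) := by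
    rw [← Submodule.ideal_span_singleton_smul, smul_eq_mul, Ideal.mul_top]
  have h3 : IsWeaklyRegular (R ⧸ (Ideal.span {r} : Ideal R)) l :=
    ((Submodule.quotEquivOfEq _ _ heq).isWeaklyRegular_congr l).mp H.2
  rw [← Ideal.Quotient.algebraMap_eq]
  exact (isWeaklyRegular_map_algebraMap_iff (R ⧸ Ideal.span {r}) (R ⧸ Ideal.span {r}) l).mpr h3

lemma perm_ofFn_succAbove {α : Type*} {m : ℕ} (g : Fin (m+1) → α) (i : Fin (m+1)) :
    (List.ofFn g).Perm (g i :: List.ofFn (g ∘ i.succAbove)) := by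
  let σ : Equiv.Perm (Fin (m+1)) := (finSuccEquiv m).trans (finSuccEquiv' i).symm
  have h1 : List.ofFn (g ∘ σ) = g i :: List.ofFn (g ∘ i.succAbove) := by
    rw [List.ofFn_succ]
    simp [σ, Function.comp_def]
  exact (h1 ▸ (Equiv.Perm.ofFn_comp_perm σ g)).symm

lemma mk_mem_max {R : Type*} [CommRing R] [IsLocalRing R] {I : Ideal R}
    (hI : I ≤ IsLocalRing.maximalIdeal R) {x : R} (hx : x ∈ IsLocalRing.maximalIdeal R)
    [IsLocalRing (R ⧸ I)] : Ideal.Quotient.mk I x ∈ IsLocalRing.maximalIdeal (R ⧸ I) := by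
  rw [IsLocalRing.mem_maximalIdeal, mem_nonunits_iff] at *
  intro hu
  apply hx
  obtain ⟨y', hy⟩ := isUnit_iff_exists_inv.mp hu
  obtain ⟨y, rfl⟩ := Ideal.Quotient.mk_surjective y'
  rw [← map_mul, ← map_one (Ideal.Quotient.mk I), Ideal.Quotient.eq] at hy
  have ht : x * y - 1 ∈ IsLocalRing.maximalIdeal R := hI hy
  have hunit : IsUnit (x * y) := by
    by_contra hnu
    have h1 : x * y ∈ IsLocalRing.maximalIdeal R :=
      (IsLocalRing.mem_maximalIdeal _).mpr hnu
    have h2 : (1 : R) ∈ IsLocalRing.maximalIdeal R := by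
      have := Submodule.sub_mem _ h1 ht; simpa using this
    exact (Ideal.ne_top_iff_one _).mp (IsLocalRing.maximalIdeal.isMaximal R).ne_top h2
  exact isUnit_of_mul_isUnit_left hunit

lemma reindex_image {A : Type*} [CommRing A] {m : ℕ} (G : Fin (m+1) → A) (i : Fin (m+1))
    (𝒯 : Finset (Finset (Fin (m+1)))) (h𝒯 : ∀ S ∈ 𝒯, i ∉ S) :
    (fun S : Finset (Fin m) => ∏ j ∈ S, G (i.succAbove j)) ''
        ↑(𝒯.image (fun S => S.preimage i.succAbove
          ((Fin.succAbove_right_injective (p := i)).injOn)))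
      = (fun S : Finset (Fin (m+1)) => ∏ j ∈ S, G j) '' ↑𝒯 := by
  rw [Finset.coe_image, Set.image_image]
  apply Set.image_congr
  intro S hS
  apply Finset.prod_preimage
  intro x hx hxr
  have hxi : x = i := by
    have := Fin.range_succAbove i
    rw [this] at hxr
    simpa using hxr
  exact absurd (hxi ▸ hx) (h𝒯 S (Finset.mem_coe.mp hS))

lemma colon_cases {R : Type*} [CommRing R] {k : ℕ} (g : Fin k → R) {h : R}
    (hnzd : IsSMulRegular R h) (𝒮 : Finset (Finset (Fin k))) (hcase : 𝒮 = ∅ ∨ ∅ ∈ 𝒮) :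
    (Ideal.span ((fun S : Finset (Fin k) => ∏ j ∈ S, g j) '' ↑𝒮)).colon (Ideal.span {h})
      = Ideal.span ((fun S : Finset (Fin k) => ∏ j ∈ S, g j) '' ↑𝒮) := by
  rcases hcase with rfl | hmem
  · rw [Finset.coe_empty, Set.image_empty, Ideal.span_empty]
    ext x
    rw [Ideal.mem_colon_span_singleton, Ideal.mem_bot, Ideal.mem_bot]
    constructor
    · intro hx
      apply hnzd
      show h • x = h • (0 : R)
      rw [smul_eq_mul, smul_eq_mul, mul_zero, mul_comm, hx]
    · rintro rfl; rw [zero_mul]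
  · have hone : (1 : R) ∈ Ideal.span ((fun S : Finset (Fin k) => ∏ j ∈ S, g j) '' ↑𝒮) :=
      Ideal.subset_span ⟨∅, Finset.mem_coe.mpr hmem, by simp⟩
    have htop : Ideal.span ((fun S : Finset (Fin k) => ∏ j ∈ S, g j) '' ↑𝒮) = ⊤ :=
      (Ideal.eq_top_iff_one _).mpr hone
    rw [htop]
    ext x
    simp [Ideal.mem_colon_span_singleton]

lemma nzd_of_append {R : Type*} [CommRing R] [IsLocalRing R] [IsNoetherianRing R]
    {l : List R} {h : R}
    (hmem : ∀ r ∈ l ++ [h], r ∈ IsLocalRing.maximalIdeal R)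
    (hreg : IsWeaklyRegular R (l ++ [h])) : IsSMulRegular R h :=
  ((isWeaklyRegular_cons_iff R h l).mp
    (IsLocalRing.isWeaklyRegular_of_perm_of_subset_maximalIdeal hreg
      (List.perm_append_singleton h l) hmem)).1

theorem key : ∀ (k : ℕ) {R : Type*} [CommRing R] [IsLocalRing R] [IsNoetherianRing R]
    (g : Fin k → R) (h : R),
    (∀ j, g j ∈ IsLocalRing.maximalIdeal R) → (h ∈ IsLocalRing.maximalIdeal R) →
    IsWeaklyRegular R (List.ofFn g ++ [h]) →
    ∀ 𝒮 : Finset (Finset (Fin k)),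
      (Ideal.span ((fun S : Finset (Fin k) => ∏ j ∈ S, g j) '' ↑𝒮)).colon (Ideal.span {h})
        = Ideal.span ((fun S : Finset (Fin k) => ∏ j ∈ S, g j) '' ↑𝒮) := by
  intro k
  induction k with
  | zero =>
    intro R _ _ _ g h hg hh hreg 𝒮
    have hmem_all : ∀ r ∈ List.ofFn g ++ [h], r ∈ IsLocalRing.maximalIdeal R := by
      intro r hr
      rcases List.mem_append.mp hr with h1 | h2
      · obtain ⟨j, rfl⟩ := ((List.mem_ofFn (f := g) (a := r)).mp h1)
        exact hg j
      · rw [List.mem_singleton] at h2; subst h2; exact hh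
    refine colon_cases g (nzd_of_append hmem_all hreg) 𝒮 ?_
    rcases 𝒮.eq_empty_or_nonempty with rfl | ⟨S, hS⟩
    · exact Or.inl rfl
    · right
      have : S = ∅ := Finset.eq_empty_of_forall_notMem (fun j _ => j.elim0)
      exact this ▸ hS
  | succ m ihm =>
    intro R _ _ _ g h hg hh hreg
    classical
    have hmem_all : ∀ r ∈ List.ofFn g ++ [h], r ∈ IsLocalRing.maximalIdeal R := by
      intro r hr
      rcases List.mem_append.mp hr with h1 | h2
      · obtain ⟨j, rfl⟩ := ((List.mem_ofFn (f := g) (a := r)).mp h1)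
        exact hg j
      · rw [List.mem_singleton] at h2; subst h2; exact hh
    have hgmem : ∀ r ∈ List.ofFn g, r ∈ IsLocalRing.maximalIdeal R := by
      intro r hr
      obtain ⟨j, rfl⟩ := ((List.mem_ofFn (f := g) (a := r)).mp hr)
      exact hg j
    have hnzd : IsSMulRegular R h := nzd_of_append hmem_all hreg
    have hwreg_g : IsWeaklyRegular R (List.ofFn g) :=
      ((isWeaklyRegular_append_iff R _ [h]).mp hreg).1
    -- Step 1 : colon by a variable g i, for ideals avoiding i
    have colonStep : ∀ (i : Fin (m+1)) (𝒯 : Finset (Finset (Fin (m+1)))), (∀ S ∈ 𝒯, i ∉ S) →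
        (Ideal.span ((fun S : Finset (Fin (m+1)) => ∏ j ∈ S, g j) '' ↑𝒯)).colon
            (Ideal.span {g i})
          = Ideal.span ((fun S : Finset (Fin (m+1)) => ∏ j ∈ S, g j) '' ↑𝒯) := by
      intro i 𝒯 h𝒯
      rw [← reindex_image g i 𝒯 h𝒯]
      have hregperm : IsWeaklyRegular R (List.ofFn (fun j => g (i.succAbove j)) ++ [g i]) := by
        refine IsLocalRing.isWeaklyRegular_of_perm_of_subset_maximalIdeal hwreg_g ?_ hgmem
        exact (perm_ofFn_succAbove g i).trans (List.perm_append_singleton (g i) _).symm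
      exact ihm (fun j => g (i.succAbove j)) (g i) (fun j => hg _) (hg i) hregperm _
    -- Step 2 : quotient step: colon by h on (monomial ideal avoiding i) + (g i)
    have quotStep : ∀ (i : Fin (m+1)) (𝒯 : Finset (Finset (Fin (m+1)))), (∀ S ∈ 𝒯, i ∉ S) →
        (Ideal.span ((fun S : Finset (Fin (m+1)) => ∏ j ∈ S, g j) '' ↑𝒯)
            ⊔ Ideal.span {g i}).colon (Ideal.span {h})
          = Ideal.span ((fun S : Finset (Fin (m+1)) => ∏ j ∈ S, g j) '' ↑𝒯)
            ⊔ Ideal.span {g i} := by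
      intro i 𝒯 h𝒯
      set I : Ideal R := Ideal.span {g i} with hI
      have hIne : I ≠ ⊤ := by
        rw [hI, Ne, Ideal.span_singleton_eq_top]
        exact (IsLocalRing.mem_maximalIdeal _).mp (hg i)
      haveI := Ideal.Quotient.nontrivial_iff.mpr hIne
      haveI : IsLocalRing (R ⧸ I) :=
        IsLocalRing.of_surjective' (Ideal.Quotient.mk I) Ideal.Quotient.mk_surjective
      have hIle : I ≤ IsLocalRing.maximalIdeal R := by
        rw [hI, Ideal.span_le, Set.singleton_subset_iff]; exact hg i
      set π := Ideal.Quotient.mk I with hπ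
      have hperm : (List.ofFn g ++ [h]).Perm
          (g i :: (List.ofFn (g ∘ i.succAbove) ++ [h])) :=
        (perm_ofFn_succAbove g i).append_right [h]
      have hreg2 := IsLocalRing.isWeaklyRegular_of_perm_of_subset_maximalIdeal hreg hperm hmem_all
      have hregQ := quot_weaklyRegular (g i) _ hreg2
      rw [List.map_append, List.map_ofFn] at hregQ
      have happ := ihm (fun j => π (g (i.succAbove j))) (π h)
          (fun j => mk_mem_max hIle (hg _)) (mk_mem_max hIle hh) hregQ
          (𝒯.image (fun S => S.preimage i.succAbove
            ((Fin.succAbove_right_injective (p := i)).injOn)))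
      have him : (fun S : Finset (Fin m) => ∏ j ∈ S, π (g (i.succAbove j))) ''
            ↑(𝒯.image (fun S => S.preimage i.succAbove
              ((Fin.succAbove_right_injective (p := i)).injOn)))
          = π '' ((fun S : Finset (Fin (m+1)) => ∏ j ∈ S, g j) '' ↑𝒯) := by
        rw [reindex_image (fun x => π (g x)) i 𝒯 h𝒯, Set.image_image]
        exact Set.image_congr (fun S _ => (map_prod π g S).symm)
      have hKeq : Ideal.span ((fun S : Finset (Fin (m+1)) => ∏ j ∈ S, g j) '' ↑𝒯) ⊔ I
          = Ideal.comap π (Ideal.map π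
              (Ideal.span ((fun S : Finset (Fin (m+1)) => ∏ j ∈ S, g j) '' ↑𝒯))) := by
        rw [Ideal.comap_map_of_surjective π Ideal.Quotient.mk_surjective]
        congr 1
        rw [← RingHom.ker_eq_comap_bot, hπ, Ideal.mk_ker]
      apply le_antisymm
      · intro x hx
        rw [Ideal.mem_colon_span_singleton] at hx
        rw [hKeq] at hx ⊢
        rw [Ideal.mem_comap, map_mul] at hx
        rw [Ideal.mem_comap]
        rw [Ideal.map_span, ← him] at hx ⊢
        rw [← happ, Ideal.mem_colon_span_singleton]
        exact hx
      · intro x hx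
        rw [Ideal.mem_colon_span_singleton]
        exact Ideal.mul_mem_right h _ hx
    -- Inner induction on the measure
    suffices H : ∀ (N : ℕ) (𝒮 : Finset (Finset (Fin (m+1)))), (∑ S ∈ 𝒮, 3 ^ S.card) ≤ N →
        (Ideal.span ((fun S : Finset (Fin (m+1)) => ∏ j ∈ S, g j) '' ↑𝒮)).colon
            (Ideal.span {h})
          = Ideal.span ((fun S : Finset (Fin (m+1)) => ∏ j ∈ S, g j) '' ↑𝒮) by
      exact fun 𝒮 => H _ 𝒮 le_rfl
    intro N
    induction N with
    | zero =>
      intro 𝒮 hN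
      have h𝒮 : 𝒮 = ∅ := by
        rw [Finset.eq_empty_iff_forall_notMem]
        intro S hS
        have h1 : (0:ℕ) < 3 ^ S.card := pow_pos (by norm_num) _
        have h2 : 3 ^ S.card ≤ ∑ S ∈ 𝒮, 3 ^ S.card :=
          Finset.single_le_sum (f := fun S : Finset (Fin (m+1)) => 3 ^ S.card)
            (fun _ _ => Nat.zero_le _) hS
        omega
      exact colon_cases g hnzd 𝒮 (Or.inl h𝒮)
    | succ N ihN =>
      intro 𝒮 hN
      by_cases hA : 𝒮 = ∅
      · exact colon_cases g hnzd 𝒮 (Or.inl hA)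
      by_cases hB : ∅ ∈ 𝒮
      · exact colon_cases g hnzd 𝒮 (Or.inr hB)
      obtain ⟨S₀, hS₀⟩ := Finset.nonempty_iff_ne_empty.mpr hA
      have hS₀ne : S₀.Nonempty := by
        rcases S₀.eq_empty_or_nonempty with rfl | hne
        · exact absurd hS₀ hB
        · exact hne
      obtain ⟨i, hi⟩ := hS₀ne
      set 𝒮₀ := 𝒮.filter (fun S => i ∉ S) with h𝒮₀
      set 𝒮₁ := 𝒮.filter (fun S => i ∈ S) with h𝒮₁
      have h𝒮₀i : ∀ S ∈ 𝒮₀, i ∉ S := fun S hS => (Finset.mem_filter.mp hS).2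
      by_cases hsing : ({i} : Finset (Fin (m+1))) ∈ 𝒮
      · -- J = J₀ ⊔ (g i) , use quotStep
        have hJ : Ideal.span ((fun S : Finset (Fin (m+1)) => ∏ j ∈ S, g j) '' ↑𝒮)
            = Ideal.span ((fun S : Finset (Fin (m+1)) => ∏ j ∈ S, g j) '' ↑𝒮₀)
              ⊔ Ideal.span {g i} := by
          apply le_antisymm
          · rw [Ideal.span_le]
            rintro x ⟨S, hS, rfl⟩
            by_cases hiS : i ∈ S
            · exact Ideal.mem_sup_right (Ideal.mem_span_singleton.mpr
                ⟨∏ j ∈ S.erase i, g j, (Finset.mul_prod_erase S g hiS).symm⟩)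
            · exact Ideal.mem_sup_left (Ideal.subset_span
                ⟨S, Finset.mem_coe.mpr (Finset.mem_filter.mpr ⟨Finset.mem_coe.mp hS, hiS⟩), rfl⟩)
          · apply sup_le
            · exact Ideal.span_mono (Set.image_mono (Finset.coe_subset.mpr
                (Finset.filter_subset _ _)))
            · rw [Ideal.span_le, Set.singleton_subset_iff]
              exact Ideal.subset_span ⟨{i}, Finset.mem_coe.mpr hsing, by simp⟩
        rw [hJ]
        exact quotStep i 𝒮₀ h𝒮₀i
      · -- measure decreasing case
        have hS₀mem1 : S₀ ∈ 𝒮₁ := Finset.mem_filter.mpr ⟨hS₀, hi⟩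
        have hScard : 2 ≤ S₀.card := by
          by_contra hlt
          have hc1 : S₀.card = 1 := by
            have := Finset.card_pos.mpr ⟨i, hi⟩
            omega
          obtain ⟨a, ha⟩ := Finset.card_eq_one.mp hc1
          have : S₀ = {i} := by
            rw [ha] at hi ⊢
            rw [Finset.mem_singleton] at hi
            rw [hi]
          exact hsing (this ▸ hS₀)
        have hμpart : (∑ S ∈ 𝒮₁, 3 ^ S.card) + (∑ S ∈ 𝒮₀, 3 ^ S.card)
            = ∑ S ∈ 𝒮, 3 ^ S.card :=
          Finset.sum_filter_add_sum_filter_not 𝒮 (fun S => i ∈ S) _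
        have hμ9 : 9 ≤ ∑ S ∈ 𝒮₁, 3 ^ S.card := by
          have h1 : 9 ≤ 3 ^ S₀.card := by
            calc (9:ℕ) = 3 ^ 2 := by norm_num
            _ ≤ 3 ^ S₀.card := Nat.pow_le_pow_right (by norm_num) hScard
          exact le_trans h1 (Finset.single_le_sum
            (f := fun S : Finset (Fin (m+1)) => 3 ^ S.card) (fun _ _ => Nat.zero_le _) hS₀mem1)
        have hins : ({i} : Finset (Fin (m+1))) ∉ 𝒮₀ :=
          fun hmem => hsing (Finset.mem_filter.mp hmem).1
        have hμins : (∑ S ∈ insert ({i} : Finset (Fin (m+1))) 𝒮₀, 3 ^ S.card) ≤ N := by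
          rw [Finset.sum_insert hins]
          have : (3:ℕ) ^ ({i} : Finset (Fin (m+1))).card = 3 := by simp
          omega
        have hK := ihN (insert ({i} : Finset (Fin (m+1))) 𝒮₀) hμins
        have hsplitK : Ideal.span ((fun S : Finset (Fin (m+1)) => ∏ j ∈ S, g j) ''
              ↑(insert ({i} : Finset (Fin (m+1))) 𝒮₀))
            = Ideal.span {g i}
              ⊔ Ideal.span ((fun S : Finset (Fin (m+1)) => ∏ j ∈ S, g j) '' ↑𝒮₀) := by
          rw [Finset.coe_insert, Set.image_insert_eq, Ideal.span_insert]
          congr 2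
          simp
        apply le_antisymm
        · intro x hx
          rw [Ideal.mem_colon_span_singleton] at hx
          have hJleK : Ideal.span ((fun S : Finset (Fin (m+1)) => ∏ j ∈ S, g j) '' ↑𝒮)
              ≤ Ideal.span ((fun S : Finset (Fin (m+1)) => ∏ j ∈ S, g j) ''
                  ↑(insert ({i} : Finset (Fin (m+1))) 𝒮₀)) := by
            rw [Ideal.span_le]
            rintro y ⟨S, hS, rfl⟩
            by_cases hiS : i ∈ S
            · have hgi : g i ∈ Ideal.span ((fun S : Finset (Fin (m+1)) => ∏ j ∈ S, g j) ''
                  ↑(insert ({i} : Finset (Fin (m+1))) 𝒮₀)) :=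
                Ideal.subset_span ⟨{i}, by simp, by simp⟩
              show (∏ j ∈ S, g j) ∈ _
              rw [← Finset.mul_prod_erase S g hiS]
              exact Ideal.mul_mem_right _ _ hgi
            · exact Ideal.subset_span ⟨S, by
                simp only [Finset.coe_insert, Set.mem_insert_iff]
                exact Or.inr (Finset.mem_coe.mpr (Finset.mem_filter.mpr
                  ⟨Finset.mem_coe.mp hS, hiS⟩)), rfl⟩
          have hxK : x ∈ Ideal.span {g i}
              ⊔ Ideal.span ((fun S : Finset (Fin (m+1)) => ∏ j ∈ S, g j) '' ↑𝒮₀) := by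
            rw [← hsplitK, ← hK]
            exact Ideal.mem_colon_span_singleton.mpr (hJleK hx)
          obtain ⟨y, hy, a₀, ha₀, hsum⟩ := Submodule.mem_sup.mp hxK
          obtain ⟨c, hc⟩ := Ideal.mem_span_singleton'.mp hy
          set 𝒮₁' := 𝒮₁.image (fun S => S.erase i) with h𝒮₁'
          have hJ₀leJ : Ideal.span ((fun S : Finset (Fin (m+1)) => ∏ j ∈ S, g j) '' ↑𝒮₀)
              ≤ Ideal.span ((fun S : Finset (Fin (m+1)) => ∏ j ∈ S, g j) '' ↑𝒮) :=
            Ideal.span_mono (Set.image_mono (Finset.coe_subset.mpr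
              (Finset.filter_subset _ _)))
          have hch : g i * (c * h) ∈
              Ideal.span ((fun S : Finset (Fin (m+1)) => ∏ j ∈ S, g j) '' ↑𝒮) := by
            have heq : g i * (c * h) = x * h - a₀ * h := by
              rw [← hsum, ← hc]; ring
            rw [heq]
            exact Submodule.sub_mem _ hx (Ideal.mul_mem_right h _ (hJ₀leJ ha₀))
          have hJle2 : Ideal.span ((fun S : Finset (Fin (m+1)) => ∏ j ∈ S, g j) '' ↑𝒮)
              ≤ Ideal.span ((fun S : Finset (Fin (m+1)) => ∏ j ∈ S, g j) '' ↑𝒮₀)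
                ⊔ Ideal.span {g i}
                  * Ideal.span ((fun S : Finset (Fin (m+1)) => ∏ j ∈ S, g j) '' ↑𝒮₁') := by
            rw [Ideal.span_le]
            rintro y ⟨S, hS, rfl⟩
            by_cases hiS : i ∈ S
            · apply Ideal.mem_sup_right
              show (∏ j ∈ S, g j) ∈ _
              rw [← Finset.mul_prod_erase S g hiS]
              exact Ideal.mul_mem_mul (Ideal.mem_span_singleton_self _)
                (Ideal.subset_span ⟨S.erase i, Finset.mem_coe.mpr
                  (Finset.mem_image_of_mem _ (Finset.mem_filter.mpr
                    ⟨Finset.mem_coe.mp hS, hiS⟩)), rfl⟩)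
            · exact Ideal.mem_sup_left (Ideal.subset_span
                ⟨S, Finset.mem_coe.mpr (Finset.mem_filter.mpr
                  ⟨Finset.mem_coe.mp hS, hiS⟩), rfl⟩)
          obtain ⟨a, ha, w, hw, hsum2⟩ := Submodule.mem_sup.mp (hJle2 hch)
          obtain ⟨b, hb, hbw⟩ := Ideal.mem_span_singleton_mul.mp hw
          have hchb : c * h - b ∈
              (Ideal.span ((fun S : Finset (Fin (m+1)) => ∏ j ∈ S, g j) '' ↑𝒮₀)).colon
                (Ideal.span {g i}) := by
            rw [Ideal.mem_colon_span_singleton]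
            have heq : (c * h - b) * g i = a := by
              linear_combination - hsum2 - hbw
            rw [heq]; exact ha
          rw [colonStep i 𝒮₀ h𝒮₀i] at hchb
          have hunion : Ideal.span ((fun S : Finset (Fin (m+1)) => ∏ j ∈ S, g j)
                '' ↑(𝒮₀ ∪ 𝒮₁'))
              = Ideal.span ((fun S : Finset (Fin (m+1)) => ∏ j ∈ S, g j) '' ↑𝒮₀)
                ⊔ Ideal.span ((fun S : Finset (Fin (m+1)) => ∏ j ∈ S, g j) '' ↑𝒮₁') := by
            rw [Finset.coe_union, Set.image_union, Ideal.span_union]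
          have hchmem : c * h ∈ Ideal.span ((fun S : Finset (Fin (m+1)) => ∏ j ∈ S, g j)
              '' ↑(𝒮₀ ∪ 𝒮₁')) := by
            rw [hunion]
            have heq : c * h = (c * h - b) + b := by ring
            rw [heq]
            exact Submodule.add_mem _ (Ideal.mem_sup_left hchb) (Ideal.mem_sup_right hb)
          have hμerase : 3 * (∑ T ∈ 𝒮₁', 3 ^ T.card) ≤ ∑ S ∈ 𝒮₁, 3 ^ S.card := by
            calc 3 * (∑ T ∈ 𝒮₁', 3 ^ T.card)
                ≤ 3 * ∑ S ∈ 𝒮₁, 3 ^ ((S.erase i).card) :=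
                  Nat.mul_le_mul_left 3 (sum_image_le' 𝒮₁ (fun S => S.erase i) (fun T => 3 ^ T.card))
              _ = ∑ S ∈ 𝒮₁, 3 * 3 ^ ((S.erase i).card) := Finset.mul_sum _ _ _
              _ = ∑ S ∈ 𝒮₁, 3 ^ S.card := by
                  apply Finset.sum_congr rfl
                  intro S hS
                  have hiS : i ∈ S := (Finset.mem_filter.mp hS).2
                  have hcard : S.card = (S.erase i).card + 1 := by
                    rw [Finset.card_erase_of_mem hiS]
                    have := Finset.card_pos.mpr ⟨i, hiS⟩
                    omega
                  rw [hcard, pow_succ]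
                  ring
          have hμunion : (∑ S ∈ 𝒮₀ ∪ 𝒮₁', 3 ^ S.card) ≤ N := by
            have h1 := Finset.sum_union_inter (s₁ := 𝒮₀) (s₂ := 𝒮₁')
              (f := fun S => (3:ℕ) ^ S.card)
            omega
          have hc2 := ihN (𝒮₀ ∪ 𝒮₁') hμunion
          have hcmem : c ∈ Ideal.span ((fun S : Finset (Fin (m+1)) => ∏ j ∈ S, g j)
              '' ↑(𝒮₀ ∪ 𝒮₁')) := by
            rw [← hc2]
            exact Ideal.mem_colon_span_singleton.mpr hchmem
          have hLle : Ideal.span ((fun S : Finset (Fin (m+1)) => ∏ j ∈ S, g j)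
                '' ↑(𝒮₀ ∪ 𝒮₁'))
              ≤ (Ideal.span ((fun S : Finset (Fin (m+1)) => ∏ j ∈ S, g j) '' ↑𝒮)).colon
                  (Ideal.span {g i}) := by
            rw [Ideal.span_le]
            rintro y ⟨S, hS, rfl⟩
            show (∏ j ∈ S, g j) ∈ _
            rw [SetLike.mem_coe, Ideal.mem_colon_span_singleton]
            rcases Finset.mem_union.mp (Finset.mem_coe.mp hS) with hS0 | hS1
            · exact Ideal.mul_mem_right _ _ (Ideal.subset_span
                ⟨S, Finset.mem_coe.mpr (Finset.filter_subset _ _ hS0), rfl⟩)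
            · obtain ⟨T, hT, rfl⟩ := Finset.mem_image.mp hS1
              have hiT : i ∈ T := (Finset.mem_filter.mp hT).2
              have heq : (∏ j ∈ T.erase i, g j) * g i = ∏ j ∈ T, g j := by
                rw [mul_comm, Finset.mul_prod_erase T g hiT]
              rw [heq]
              exact Ideal.subset_span ⟨T, Finset.mem_coe.mpr
                (Finset.filter_subset _ _ hT), rfl⟩
          have hgic : c * g i ∈
              Ideal.span ((fun S : Finset (Fin (m+1)) => ∏ j ∈ S, g j) '' ↑𝒮) :=
            Ideal.mem_colon_span_singleton.mp (hLle hcmem)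
          rw [← hsum, ← hc]
          exact Submodule.add_mem _ hgic (hJ₀leJ ha₀)
        · intro x hx
          rw [Ideal.mem_colon_span_singleton]
          exact Ideal.mul_mem_right h _ hx
/-- `IsSquareFreeMonomialIdeal f J` means the ideal `J` is generated by square-free
monomials in the elements `f i`, i.e. by products `∏_{i ∈ S} f i` over distinct
elements, for `S` ranging over some collection of finite index sets. -/
def IsSquareFreeMonomialIdeal {R : Type*} [CommRing R] {m : ℕ}
    (f : Fin m → R) (J : Ideal R) : Prop :=
  ∃ 𝒮 : Set (Finset (Fin m)), J = Ideal.span ((fun S : Finset (Fin m) => ∏ i ∈ S, f i) '' 𝒮)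

/-- Let `R` be a local (Noetherian) commutative ring and `f₁,…,fₙ` a regular sequence in
its maximal ideal.  If `J` is an ideal generated by square-free monomials in
`f₁,…,f_{n-1}`, then the ideal quotient satisfies `(J : fₙ) = J`. -/
theorem stmt4 {R : Type*} [CommRing R] [IsLocalRing R] [IsNoetherianRing R] {n : ℕ}
    (f : Fin (n + 1) → R) (hmem : ∀ i, f i ∈ IsLocalRing.maximalIdeal R)
    (hreg : RingTheory.Sequence.IsRegular R (List.ofFn f))
    (J : Ideal R) (hJ : IsSquareFreeMonomialIdeal (fun i : Fin n => f i.castSucc) J) :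
    J.colon (Ideal.span {f (Fin.last n)}) = J := by
  obtain ⟨𝒮, rfl⟩ := hJ
  have hfin : 𝒮.Finite := Set.toFinite 𝒮
  have hcoe : (↑hfin.toFinset : Set (Finset (Fin n))) = 𝒮 := hfin.coe_toFinset
  rw [← hcoe]
  have hsplit : List.ofFn f
      = List.ofFn (fun i : Fin n => f i.castSucc) ++ [f (Fin.last n)] := by
    rw [List.ofFn_succ', List.concat_eq_append]
  exact key n (fun i : Fin n => f i.castSucc) (f (Fin.last n)) (fun i => hmem _) (hmem _)
    (by rw [← hsplit]; exact hreg.toIsWeaklyRegular) hfin.toFinset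
end

section
/- Let $R$ be a local commutative ring and $f_1, \ldots, f_n$ a regular sequence in the maximal ideal. If $I$ and $J$ are ideals generated by square-free monomials in $f_1, \ldots, f_{n-1}$, then $((f_n) + I) \cap ((f_n) + J) = (f_n) + (I \cap J)$. -/
open RingTheory.Sequence Pointwise

/-- The ideal generated by the square-free monomials `∏ i ∈ T, f i` for `T ∈ 𝒯`. -/
private def monIdeal {R : Type*} [CommRing R] {ι : Type*} (f : ι → R)
    (𝒯 : Set (Finset ι)) : Ideal R :=
  Ideal.span ((fun S : Finset ι => ∏ i ∈ S, f i) '' 𝒯)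

private lemma mon_mem_monIdeal {R : Type*} [CommRing R] {ι : Type*} (f : ι → R)
    {𝒯 : Set (Finset ι)} {T : Finset ι} (hT : T ∈ 𝒯) :
    (∏ i ∈ T, f i) ∈ monIdeal f 𝒯 :=
  Ideal.subset_span ⟨T, hT, rfl⟩

private lemma monIdeal_mono {R : Type*} [CommRing R] {ι : Type*} (f : ι → R)
    {𝒯 𝒯' : Set (Finset ι)} (h : 𝒯 ⊆ 𝒯') : monIdeal f 𝒯 ≤ monIdeal f 𝒯' :=
  Ideal.span_mono (Set.image_mono h)

private lemma monIdeal_union {R : Type*} [CommRing R] {ι : Type*} (f : ι → R)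
    (𝒯 𝒯' : Set (Finset ι)) : monIdeal f (𝒯 ∪ 𝒯') = monIdeal f 𝒯 ⊔ monIdeal f 𝒯' := by
  rw [monIdeal, Set.image_union, Ideal.span_union]; rfl

private lemma monIdeal_smul_le {R : Type*} [CommRing R] {M : Type*} [AddCommGroup M]
    [Module R M] {ι : Type*} (f : ι → R) (𝒯 : Set (Finset ι)) {P : Submodule R M}
    (h : ∀ T ∈ 𝒯, ∀ x : M, (∏ i ∈ T, f i) • x ∈ P) :
    monIdeal f 𝒯 • (⊤ : Submodule R M) ≤ P := by
  rw [Submodule.smul_le]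
  rintro r hr x -
  induction hr using Submodule.span_induction with
  | mem a ha =>
    obtain ⟨T, hT, rfl⟩ := ha
    exact h T hT x
  | zero => simpa using P.zero_mem
  | add a b _ _ ha hb => rw [add_smul]; exact P.add_mem ha hb
  | smul r a _ ha => rw [smul_eq_mul, mul_smul]; exact P.smul_mem r ha

private lemma mem_pointwise_smul_iff {R : Type*} [CommRing R] {M : Type*} [AddCommGroup M]
    [Module R M] (a : R) (S : Submodule R M) (x : M) :
    x ∈ a • S ↔ ∃ y ∈ S, a • y = x := by
  rw [← SetLike.mem_coe, Submodule.coe_pointwise_smul]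
  exact Set.mem_smul_set

/-- Key lemma: if all lists of distinct elements from `{g} ∪ V` of the family `f` are
weakly regular on `M`, and `𝒯` is a family of subsets of `V` (so `g` occurs in no
monomial), then `f g` is a nonzerodivisor on `M / (monomial ideal) • M`. -/
private lemma lemA (k : ℕ) :
    ∀ {R : Type*} [CommRing R] {M : Type*} [AddCommGroup M] [Module R M]
      {ι : Type*} [DecidableEq ι] (f : ι → R) (V : Finset ι) (_ : V.card = k)
      (g : ι) (_ : g ∉ V)
      (_ : ∀ l : List ι, l.Nodup → (∀ i ∈ l, i ∈ insert g V) →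
        IsWeaklyRegular M (l.map f))
      (𝒯 : Set (Finset ι)) (_ : ∀ T ∈ 𝒯, T ⊆ V) (c : M),
      f g • c ∈ monIdeal f 𝒯 • (⊤ : Submodule R M) →
      c ∈ monIdeal f 𝒯 • (⊤ : Submodule R M) := by
  induction k with
  | zero =>
    intro R _ M _ _ ι _ f V hV g hg hreg 𝒯 h𝒯 c hc
    have hV0 : V = ∅ := Finset.card_eq_zero.mp hV
    by_cases hemp : ∅ ∈ 𝒯
    · have h1 : (1 : R) ∈ monIdeal f 𝒯 := by
        simpa using mon_mem_monIdeal f hemp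
      simpa using Submodule.smul_mem_smul h1 (Submodule.mem_top : c ∈ ⊤)
    · have h𝒯0 : 𝒯 = ∅ := by
        ext T
        simp only [Set.mem_empty_iff_false, iff_false]
        intro hT
        have hTe : T = ∅ := by
          have := h𝒯 T hT
          rw [hV0, Finset.subset_empty] at this
          exact this
        exact hemp (hTe ▸ hT)
      subst h𝒯0
      rw [monIdeal, Set.image_empty, Ideal.span_empty, Submodule.bot_smul,
        Submodule.mem_bot] at hc ⊢
      have hr := hreg [g] (List.nodup_singleton g) (by simp)
      rw [List.map_singleton, isWeaklyRegular_singleton_iff] at hr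
      exact hr (show f g • c = f g • 0 by rw [hc, smul_zero])
  | succ k ih =>
    intro R _ M _ _ ι _ f V hV g hg hreg 𝒯 h𝒯 c hc
    obtain ⟨j, hj⟩ := Finset.card_pos.mp (by rw [hV]; exact k.succ_pos)
    have hjg : j ≠ g := fun h => hg (h ▸ hj)
    have hVe : (V.erase j).card = k := by
      rw [Finset.card_erase_of_mem hj, hV]
      omega
    have hge : g ∉ V.erase j := fun h => hg (Finset.mem_of_mem_erase h)
    have hje : j ∉ V.erase j := Finset.notMem_erase j V
    -- the three families of monomials
    set 𝒯₀ : Set (Finset ι) := {T | T ∈ 𝒯 ∧ j ∉ T} with h𝒯₀def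
    set 𝒯₁ : Set (Finset ι) := {T | T ∈ 𝒯 ∧ j ∈ T} with h𝒯₁def
    set 𝒯₂ : Set (Finset ι) := 𝒯₀ ∪ (fun T => T.erase j) '' 𝒯₁ with h𝒯₂def
    have h𝒯₀V : ∀ T ∈ 𝒯₀, T ⊆ V.erase j := fun T hT =>
      Finset.subset_erase.mpr ⟨h𝒯 T hT.1, hT.2⟩
    have h𝒯₂V : ∀ T ∈ 𝒯₂, T ⊆ V.erase j := by
      rintro T (hT | ⟨T', hT', rfl⟩)
      · exact h𝒯₀V T hT
      · intro x hx
        exact Finset.mem_erase.mpr ⟨Finset.ne_of_mem_erase hx,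
          h𝒯 T' hT'.1 (Finset.mem_of_mem_erase hx)⟩
    have hfac : ∀ T ∈ 𝒯₁, (∏ i ∈ T, f i) = f j * ∏ i ∈ T.erase j, f i :=
      fun T hT => (Finset.mul_prod_erase T f hT.2).symm
    -- the quotient module
    set N : Submodule R M := f j • (⊤ : Submodule R M) with hNdef
    have hfjzero : ∀ x : M ⧸ N, f j • x = 0 := by
      intro x
      obtain ⟨y, rfl⟩ := N.mkQ_surjective x
      rw [← map_smul]
      exact (Submodule.Quotient.mk_eq_zero N).mpr
        (Submodule.smul_mem_pointwise_smul y (f j) ⊤ trivial)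
    -- regularity hypotheses for the smaller data
    have hregQ : ∀ l : List ι, l.Nodup → (∀ i ∈ l, i ∈ insert g (V.erase j)) →
        IsWeaklyRegular (M ⧸ N) (l.map f) := by
      intro l hl hlm
      have hjl : j ∉ l := by
        intro hjl
        rcases Finset.mem_insert.mp (hlm j hjl) with h | h
        · exact hjg h
        · exact hje h
      have h2 : ∀ i ∈ (j :: l), i ∈ insert g V := by
        intro i hi
        rcases List.mem_cons.mp hi with rfl | hi
        · exact Finset.mem_insert_of_mem hj
        · rcases Finset.mem_insert.mp (hlm i hi) with h | h
          · exact h ▸ Finset.mem_insert_self g V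
          · exact Finset.mem_insert_of_mem (Finset.mem_of_mem_erase h)
      have h3 := hreg (j :: l) (List.nodup_cons.mpr ⟨hjl, hl⟩) h2
      rw [List.map_cons, isWeaklyRegular_cons_iff] at h3
      exact h3.2
    have hregj : ∀ l : List ι, l.Nodup → (∀ i ∈ l, i ∈ insert j (V.erase j)) →
        IsWeaklyRegular M (l.map f) := by
      intro l hl hlm
      refine hreg l hl fun i hi => ?_
      rcases Finset.mem_insert.mp (hlm i hi) with rfl | h
      · exact Finset.mem_insert_of_mem hj
      · exact Finset.mem_insert_of_mem (Finset.mem_of_mem_erase h)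
    have hregM : ∀ l : List ι, l.Nodup → (∀ i ∈ l, i ∈ insert g (V.erase j)) →
        IsWeaklyRegular M (l.map f) := by
      intro l hl hlm
      refine hreg l hl fun i hi => ?_
      rcases Finset.mem_insert.mp (hlm i hi) with rfl | h
      · exact Finset.mem_insert_self _ _
      · exact Finset.mem_insert_of_mem (Finset.mem_of_mem_erase h)
    -- Step 1: pass to the quotient by `f j`
    have hπc : f g • (N.mkQ c) ∈ monIdeal f 𝒯₀ • (⊤ : Submodule R (M ⧸ N)) := by
      have h1 : N.mkQ (f g • c) ∈ (monIdeal f 𝒯 • (⊤ : Submodule R M)).map N.mkQ :=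
        Submodule.mem_map_of_mem hc
      rw [Submodule.map_smul'', Submodule.map_top, Submodule.range_mkQ, map_smul] at h1
      refine monIdeal_smul_le f 𝒯 (fun T hT x => ?_) h1
      by_cases hjT : j ∈ T
      · have hz : (∏ i ∈ T, f i) • x = 0 := by
          rw [hfac T ⟨hT, hjT⟩, mul_comm, mul_smul, hfjzero, smul_zero]
        rw [hz]
        exact Submodule.zero_mem _
      · exact Submodule.smul_mem_smul (mon_mem_monIdeal f ⟨hT, hjT⟩) Submodule.mem_top
    have hπc2 : N.mkQ c ∈ monIdeal f 𝒯₀ • (⊤ : Submodule R (M ⧸ N)) :=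
      ih f (V.erase j) hVe g hge hregQ 𝒯₀ h𝒯₀V (N.mkQ c) hπc
    -- pull back
    have hcK : c ∈ monIdeal f 𝒯₀ • (⊤ : Submodule R M) ⊔ N := by
      have h2 : c ∈ Submodule.comap N.mkQ ((monIdeal f 𝒯₀ • (⊤ : Submodule R M)).map N.mkQ) := by
        rw [Submodule.mem_comap, Submodule.map_smul'', Submodule.map_top, Submodule.range_mkQ]
        exact hπc2
      rwa [Submodule.comap_map_eq, Submodule.ker_mkQ] at h2
    obtain ⟨k₀, hk₀, z, hz, rfl⟩ := Submodule.mem_sup.mp hcK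
    obtain ⟨b, -, rfl⟩ := (mem_pointwise_smul_iff (f j) ⊤ z).mp hz
    clear hcK hz
    have hK₀K : monIdeal f 𝒯₀ • (⊤ : Submodule R M) ≤ monIdeal f 𝒯 • (⊤ : Submodule R M) :=
      Submodule.smul_mono_left (monIdeal_mono f (fun T hT => hT.1))
    -- step 2: kill the `k₀` part
    have hb1 : f g • (f j • b) ∈ monIdeal f 𝒯 • (⊤ : Submodule R M) := by
      rw [smul_add] at hc
      simpa using Submodule.sub_mem _ hc (Submodule.smul_mem _ (f g) (hK₀K hk₀))
    -- step 3: split `K` as `K₀ ⊔ f j • K₁'`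
    have hsplit : monIdeal f 𝒯 • (⊤ : Submodule R M) ≤
        monIdeal f 𝒯₀ • (⊤ : Submodule R M) ⊔
          f j • (monIdeal f ((fun T => T.erase j) '' 𝒯₁) • (⊤ : Submodule R M)) := by
      refine monIdeal_smul_le f 𝒯 (fun T hT x => ?_)
      by_cases hjT : j ∈ T
      · have hT1 : (∏ i ∈ T, f i) • x = f j • ((∏ i ∈ T.erase j, f i) • x) := by
          rw [hfac T ⟨hT, hjT⟩, mul_smul]
        rw [hT1]
        exact Submodule.mem_sup_right (Submodule.smul_mem_pointwise_smul _ _ _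
          (Submodule.smul_mem_smul (mon_mem_monIdeal f ⟨T, ⟨hT, hjT⟩, rfl⟩) Submodule.mem_top))
      · exact Submodule.mem_sup_left
          (Submodule.smul_mem_smul (mon_mem_monIdeal f ⟨hT, hjT⟩) Submodule.mem_top)
    obtain ⟨u, hu, w', hw', huw⟩ := Submodule.mem_sup.mp (hsplit hb1)
    obtain ⟨w, hw, rfl⟩ := (mem_pointwise_smul_iff (f j) _ w').mp hw'
    have h5 : f j • (f g • b - w) ∈ monIdeal f 𝒯₀ • (⊤ : Submodule R M) := by
      have he : f j • (f g • b - w) = f g • (f j • b) - f j • w := by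
        rw [smul_sub, smul_comm]
      rw [he, ← huw]
      simpa using hu
    have h6 : f g • b - w ∈ monIdeal f 𝒯₀ • (⊤ : Submodule R M) :=
      ih f (V.erase j) hVe j hje hregj 𝒯₀ h𝒯₀V _ h5
    have h7 : f g • b ∈ monIdeal f 𝒯₂ • (⊤ : Submodule R M) := by
      rw [h𝒯₂def, monIdeal_union, Submodule.sup_smul]
      have hb2 : f g • b = (f g • b - w) + w := (sub_add_cancel _ _).symm
      rw [hb2]
      exact Submodule.add_mem _ (Submodule.mem_sup_left h6) (Submodule.mem_sup_right hw)
    have h9 : b ∈ monIdeal f 𝒯₂ • (⊤ : Submodule R M) :=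
      ih f (V.erase j) hVe g hge hregM 𝒯₂ h𝒯₂V b h7
    -- step 4: multiply back by `f j`
    have hmul : ∀ a ∈ monIdeal f 𝒯₂, f j * a ∈ monIdeal f 𝒯 := by
      intro a ha
      induction ha using Submodule.span_induction with
      | mem a ha' =>
        obtain ⟨T, hT, rfl⟩ := ha'
        rcases hT with hT | ⟨T', hT', rfl⟩
        · exact Ideal.mul_mem_left _ _ (mon_mem_monIdeal f hT.1)
        · rw [← hfac T' hT']
          exact mon_mem_monIdeal f hT'.1
      | zero => simpa using (monIdeal f 𝒯).zero_mem
      | add a b _ _ ha hb => rw [mul_add]; exact Ideal.add_mem _ ha hb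
      | smul r a _ ha =>
        rw [smul_eq_mul, mul_left_comm]
        exact Ideal.mul_mem_left _ _ ha
    have h10 : f j • b ∈ monIdeal f 𝒯 • (⊤ : Submodule R M) := by
      refine Submodule.smul_induction_on
        (p := fun x => f j • x ∈ monIdeal f 𝒯 • (⊤ : Submodule R M)) h9 ?_ ?_
      · intro a ha m _
        rw [smul_smul]
        exact Submodule.smul_mem_smul (hmul a ha) Submodule.mem_top
      · intro x y hx hy
        rw [smul_add]
        exact Submodule.add_mem _ hx hy
    exact Submodule.add_mem _ (hK₀K hk₀) h10

private lemma ideal_smul_top {R : Type*} [CommRing R] (I : Ideal R) :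
    I • (⊤ : Submodule R R) = I := by
  apply le_antisymm
  · rw [Submodule.smul_le]
    intro r hr n _
    simpa [smul_eq_mul] using I.mul_mem_right n hr
  · intro r hr
    simpa using Submodule.smul_mem_smul hr (Submodule.mem_top (x := (1 : R)))

private lemma hreg_lists {R : Type*} [CommRing R] [IsLocalRing R] [IsNoetherianRing R] {n : ℕ}
    (f : Fin n → R) (hmem : ∀ i, f i ∈ IsLocalRing.maximalIdeal R)
    (hreg : RingTheory.Sequence.IsRegular R (List.ofFn f)) :
    ∀ l : List (Fin n), l.Nodup → IsWeaklyRegular R (l.map f) := by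
  classical
  intro l hl
  set rest := (List.finRange n).filter (fun i => i ∉ l) with hrest
  have hnodup : (l ++ rest).Nodup := by
    rw [List.nodup_append]
    refine ⟨hl, (List.nodup_finRange n).filter _, ?_⟩
    intro a ha b hb hab
    subst hab
    have := List.mem_filter.mp hb
    simp only [decide_eq_true_eq] at this
    exact this.2 ha
  have hperm : (List.finRange n).Perm (l ++ rest) := by
    apply List.perm_of_nodup_nodup_toFinset_eq (List.nodup_finRange n) hnodup
    ext i
    constructor
    · intro _
      by_cases hi : i ∈ l
      · simp [hi]
      · simp [hrest, List.mem_filter, hi, List.mem_finRange]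
    · intro _
      simp [List.mem_finRange]
  have h1 : IsWeaklyRegular R ((l ++ rest).map f) := by
    refine IsLocalRing.isWeaklyRegular_of_perm_of_subset_maximalIdeal
      hreg.toIsWeaklyRegular (by simpa [List.ofFn_eq_map] using hperm.map f) ?_
    intro r hr
    obtain ⟨i, rfl⟩ := List.mem_ofFn.mp hr
    exact hmem i
  rw [List.map_append, isWeaklyRegular_append_iff] at h1
  exact h1.1

/-- Let `R` be a local (Noetherian) commutative ring and `f₁,…,fₙ` a regular sequence in
its maximal ideal.  If `I` and `J` are ideals generated by square-free monomials in
`f₁,…,f_{n-1}`, then `((fₙ) + I) ∩ ((fₙ) + J) = (fₙ) + (I ∩ J)`. -/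
theorem stmt5 {R : Type*} [CommRing R] [IsLocalRing R] [IsNoetherianRing R] {n : ℕ}
    (f : Fin (n + 1) → R) (hmem : ∀ i, f i ∈ IsLocalRing.maximalIdeal R)
    (hreg : RingTheory.Sequence.IsRegular R (List.ofFn f))
    (I J : Ideal R)
    (hI : IsSquareFreeMonomialIdeal (fun i : Fin n => f i.castSucc) I)
    (hJ : IsSquareFreeMonomialIdeal (fun i : Fin n => f i.castSucc) J) :
    (Ideal.span {f (Fin.last n)} + I) ⊓ (Ideal.span {f (Fin.last n)} + J) =
      Ideal.span {f (Fin.last n)} + (I ⊓ J) := by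
  classical
  obtain ⟨𝒮, rfl⟩ := hI
  obtain ⟨𝒯, rfl⟩ := hJ
  set emb : Fin n ↪ Fin (n + 1) := ⟨Fin.castSucc, Fin.castSucc_injective n⟩ with hembdef
  set V : Finset (Fin (n + 1)) := Finset.univ.map emb with hVdef
  have hgV : Fin.last n ∉ V := by
    simp only [hVdef, Finset.mem_map, Finset.mem_univ, true_and]
    rintro ⟨i, hi⟩
    exact absurd hi (Fin.ne_of_lt (Fin.castSucc_lt_last i))
  have key : ∀ 𝒰 : Set (Finset (Fin n)),
      Ideal.span ((fun S : Finset (Fin n) => ∏ i ∈ S, f i.castSucc) '' 𝒰)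
        = monIdeal f ((fun S : Finset (Fin n) => S.map emb) '' 𝒰) := by
    intro 𝒰
    rw [monIdeal, Set.image_image]
    congr 1
    apply Set.image_congr
    intro S _
    rw [Finset.prod_map]
    rfl
  rw [key 𝒮, key 𝒯]
  set 𝒮' : Set (Finset (Fin (n + 1))) := (fun S : Finset (Fin n) => S.map emb) '' 𝒮 with h𝒮'
  set 𝒯' : Set (Finset (Fin (n + 1))) := (fun S : Finset (Fin n) => S.map emb) '' 𝒯 with h𝒯'
  have hsubV : ∀ 𝒰 : Set (Finset (Fin n)), ∀ T ∈ (fun S : Finset (Fin n) => S.map emb) '' 𝒰,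
      T ⊆ V := by
    rintro 𝒰 T ⟨S, -, rfl⟩
    exact Finset.map_subset_map.mpr (Finset.subset_univ S)
  have hlists : ∀ l : List (Fin (n + 1)), l.Nodup →
      (∀ i ∈ l, i ∈ insert (Fin.last n) V) → IsWeaklyRegular R (l.map f) :=
    fun l hl _ => hreg_lists f hmem hreg l hl
  have NZD : ∀ (𝒰 : Set (Finset (Fin (n + 1)))), (∀ T ∈ 𝒰, T ⊆ V) → ∀ c : R,
      c * f (Fin.last n) ∈ monIdeal f 𝒰 → c ∈ monIdeal f 𝒰 := by
    intro 𝒰 h𝒰 c hc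
    have h1 : f (Fin.last n) • c ∈ monIdeal f 𝒰 • (⊤ : Submodule R R) := by
      rw [ideal_smul_top, smul_eq_mul, mul_comm]
      exact hc
    have h2 := lemA V.card f V rfl (Fin.last n) hgV hlists 𝒰 h𝒰 c h1
    rwa [ideal_smul_top] at h2
  apply le_antisymm
  · intro x hx
    obtain ⟨hx1, hx2⟩ := Submodule.mem_inf.mp hx
    rw [Submodule.add_eq_sup] at hx1 hx2
    obtain ⟨y1, hy1, u, hu, hxu⟩ := Submodule.mem_sup.mp hx1
    obtain ⟨y2, hy2, v, hv, hxv⟩ := Submodule.mem_sup.mp hx2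
    obtain ⟨a, rfl⟩ := Ideal.mem_span_singleton'.mp hy1
    obtain ⟨b, rfl⟩ := Ideal.mem_span_singleton'.mp hy2
    have hab : (a - b) * f (Fin.last n) ∈ monIdeal f (𝒮' ∪ 𝒯') := by
      have he : (a - b) * f (Fin.last n) = v - u := by
        linear_combination hxu - hxv
      rw [he, monIdeal_union]
      exact Submodule.sub_mem _ (Submodule.mem_sup_right hv) (Submodule.mem_sup_left hu)
    have hab2 : a - b ∈ monIdeal f 𝒮' ⊔ monIdeal f 𝒯' := by
      rw [← monIdeal_union]
      exact NZD (𝒮' ∪ 𝒯') (by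
        rintro T (hT | hT)
        · exact hsubV 𝒮 T hT
        · exact hsubV 𝒯 T hT) (a - b) hab
    obtain ⟨p, hp, q, hq, hpq⟩ := Submodule.mem_sup.mp hab2
    have hwI : u + p * f (Fin.last n) ∈ monIdeal f 𝒮' :=
      Submodule.add_mem _ hu (Ideal.mul_mem_right _ _ hp)
    have hwJ : u + p * f (Fin.last n) ∈ monIdeal f 𝒯' := by
      have he : u + p * f (Fin.last n) = v - q * f (Fin.last n) := by
        have he2 : (a - b) * f (Fin.last n) = v - u := by
          linear_combination hxu - hxv
        linear_combination he2 + f (Fin.last n) * hpq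
      rw [he]
      exact Submodule.sub_mem _ hv (Ideal.mul_mem_right _ _ hq)
    rw [Submodule.add_eq_sup]
    refine Submodule.mem_sup.mpr ⟨(a - p) * f (Fin.last n),
      Ideal.mem_span_singleton'.mpr ⟨a - p, rfl⟩,
      u + p * f (Fin.last n), Submodule.mem_inf.mpr ⟨hwI, hwJ⟩, ?_⟩
    linear_combination hxu
  · rw [Submodule.add_eq_sup, Submodule.add_eq_sup, Submodule.add_eq_sup]
    exact le_inf (sup_le_sup_left inf_le_left _) (sup_le_sup_left inf_le_right _)
end

section
/- Let $R$ be a local commutative ring and $f_1, \ldots, f_n$ a regular sequence in the maximal ideal. If $I$ and $J$ are ideals generated by square-free monomials in $f_1, \ldots, f_{n-1}$, then $(I f_n + J) : f_n = I + J$. -/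
open Ideal RingTheory.Sequence IsLocalRing

universe u

section AuxiliaryLemmas

variable {R : Type u} [CommRing R]

lemma isSMulRegular_quotient_iff (I : Ideal R) (c : R) :
    IsSMulRegular (R ⧸ I) c ↔ ∀ r : R, r * c ∈ I → r ∈ I := by
  constructor
  · intro h r hr
    have h0 : c • (Ideal.Quotient.mk I r) = c • (0 : R ⧸ I) := by
      rw [smul_zero]
      show Ideal.Quotient.mk I (c * r) = 0
      rw [Ideal.Quotient.eq_zero_iff_mem, mul_comm]
      exact hr
    have := h h0
    rwa [Ideal.Quotient.eq_zero_iff_mem] at this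
  · intro h x y hxy
    obtain ⟨u, rfl⟩ := Ideal.Quotient.mk_surjective x
    obtain ⟨v, rfl⟩ := Ideal.Quotient.mk_surjective y
    have : Ideal.Quotient.mk I (c * u) = Ideal.Quotient.mk I (c * v) := hxy
    rw [Ideal.Quotient.mk_eq_mk_iff_sub_mem] at this ⊢
    have : (u - v) * c ∈ I := by
      have h2 : c * u - c * v = (u - v) * c := by ring
      rwa [h2] at this
    exact h _ this

lemma isWeaklyRegular_iff_colon (L : List R) :
    IsWeaklyRegular R L ↔
      ∀ (i : ℕ) (h : i < L.length) (r : R),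
        r * L[i] ∈ Ideal.ofList (L.take i) → r ∈ Ideal.ofList (L.take i) := by
  rw [RingTheory.Sequence.isWeaklyRegular_iff]
  refine forall_congr' fun i => forall_congr' fun h => ?_
  have hq : (Ideal.ofList (L.take i) • ⊤ : Submodule R R) = Ideal.ofList (L.take i) := by
    rw [Ideal.smul_eq_mul, Ideal.mul_top]
  rw [hq]
  exact isSMulRegular_quotient_iff _ _

lemma mem_quot_span_iff {a : R} {C : Ideal R} (z : R) :
    Ideal.Quotient.mk (Ideal.span {a}) z ∈ Ideal.map (Ideal.Quotient.mk (Ideal.span {a})) C ↔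
      z ∈ C ⊔ Ideal.span {a} := by
  rw [← Ideal.mem_comap, Ideal.comap_map_of_surjective _ Ideal.Quotient.mk_surjective,
    ← RingHom.ker_eq_comap_bot, Ideal.mk_ker]

lemma wr_quotient {a : R} {L : List R} (h : IsWeaklyRegular R (a :: L)) :
    IsWeaklyRegular (R ⧸ Ideal.span {a}) (L.map (Ideal.Quotient.mk (Ideal.span {a}))) := by
  rw [isWeaklyRegular_iff_colon] at h ⊢
  intro i hi r hr
  rw [List.length_map] at hi
  obtain ⟨r, rfl⟩ := Ideal.Quotient.mk_surjective r
  have hof : Ideal.ofList ((L.map (Ideal.Quotient.mk (Ideal.span {a}))).take i)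
      = Ideal.map (Ideal.Quotient.mk (Ideal.span {a})) (Ideal.ofList (L.take i)) := by
    rw [Ideal.map_ofList, List.map_take]
  rw [hof, mem_quot_span_iff]
  rw [hof] at hr
  have hget : (L.map (Ideal.Quotient.mk (Ideal.span {a})))[i] =
      Ideal.Quotient.mk (Ideal.span {a}) L[i] := by
    simp
  rw [hget, ← _root_.map_mul, mem_quot_span_iff] at hr
  have key := h (i + 1) (by simpa using hi) r
  have hofc : Ideal.ofList ((a :: L).take (i + 1)) = Ideal.ofList (L.take i) ⊔ Ideal.span {a} := by
    rw [List.take_succ_cons, Ideal.ofList_cons, sup_comm]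
  rw [hofc] at key
  exact key (by simpa using hr)

lemma quotient_isLocalRing [IsLocalRing R] {I : Ideal R} (hI : I ≠ ⊤) :
    IsLocalRing (R ⧸ I) :=
  haveI := Ideal.Quotient.nontrivial_iff.mpr hI
  IsLocalRing.of_surjective' (Ideal.Quotient.mk I) Ideal.Quotient.mk_surjective

lemma mk_mem_maximalIdeal [IsLocalRing R] {I : Ideal R} (hI : I ≠ ⊤) {r : R}
    (hr : r ∈ maximalIdeal R) :
    haveI := quotient_isLocalRing hI
    Ideal.Quotient.mk I r ∈ maximalIdeal (R ⧸ I) := by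
  haveI := Ideal.Quotient.nontrivial_iff.mpr hI
  haveI := quotient_isLocalRing hI
  haveI : IsLocalHom (Ideal.Quotient.mk I) :=
    IsLocalHom.of_surjective _ Ideal.Quotient.mk_surjective
  rw [IsLocalRing.mem_maximalIdeal] at hr ⊢
  exact fun hu => hr (IsLocalHom.map_nonunit _ hu)

lemma krull_trick [IsLocalRing R] [IsNoetherianRing R]
    {C : Ideal R} {a : R} (ha : a ∈ maximalIdeal R) {s : R}
    (h : ∀ k : ℕ, s ∈ C ⊔ Ideal.span {a ^ k}) : s ∈ C := by
  by_cases hC : C = ⊤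
  · simp [hC]
  haveI := Ideal.Quotient.nontrivial_iff.mpr hC
  haveI := quotient_isLocalRing hC
  haveI : IsNoetherianRing (R ⧸ C) :=
    isNoetherianRing_of_surjective R _ (Ideal.Quotient.mk C) Ideal.Quotient.mk_surjective
  rw [← Ideal.Quotient.eq_zero_iff_mem]
  have hmk : Ideal.Quotient.mk C s ∈ ⨅ k : ℕ, (maximalIdeal (R ⧸ C)) ^ k := by
    rw [Submodule.mem_iInf]
    intro k
    obtain ⟨c, hc, t, ht, rfl⟩ := Submodule.mem_sup.mp (h k)
    obtain ⟨v, rfl⟩ := Ideal.mem_span_singleton'.mp ht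
    have h1 : Ideal.Quotient.mk C (c + v * a ^ k)
        = Ideal.Quotient.mk C v * (Ideal.Quotient.mk C a) ^ k := by
      rw [map_add, Ideal.Quotient.eq_zero_iff_mem.mpr hc, zero_add, _root_.map_mul, map_pow]
    rw [h1]
    exact Ideal.mul_mem_left _ _ (Ideal.pow_mem_pow (mk_mem_maximalIdeal hC ha) k)
  rwa [Ideal.iInf_pow_eq_bot_of_isLocalRing _
    (Ideal.IsMaximal.ne_top (IsLocalRing.maximalIdeal.isMaximal _)), Submodule.mem_bot] at hmk

lemma key_s6 : ∀ (n : ℕ) {R : Type u} [CommRing R] [IsLocalRing R] [IsNoetherianRing R]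
    (L : List R) (x : R), L.length = n →
    (∀ r ∈ L, r ∈ maximalIdeal R) → x ∈ maximalIdeal R →
    IsWeaklyRegular R (L ++ [x]) →
    ∀ (G : Set (List R)), (∀ l ∈ G, l.Sublist L) →
    ∀ r : R, r * x ∈ Ideal.span (List.prod '' G) → r ∈ Ideal.span (List.prod '' G) := by
  intro n
  induction n with
  | zero =>
    intro R _ _ _ L x hlen hL hx hwr G hG r hr
    rw [List.length_eq_zero_iff] at hlen
    subst hlen
    by_cases hnil : ([] : List R) ∈ G
    · have h1 : (1 : R) ∈ Ideal.span (List.prod '' G) :=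
        Ideal.subset_span ⟨[], hnil, List.prod_nil⟩
      have : Ideal.span (List.prod '' G) = ⊤ := (Ideal.eq_top_iff_one _).mpr h1
      rw [this]; trivial
    · have hGempty : G = ∅ := by
        ext l
        simp only [Set.mem_empty_iff_false, iff_false]
        intro hl
        exact hnil (List.sublist_nil.mp (hG l hl) ▸ hl)
      subst hGempty
      rw [Set.image_empty, Ideal.span_empty] at hr ⊢
      rw [isWeaklyRegular_iff_colon] at hwr
      have := hwr 0 (by simp) r
      simpa using this (by simpa using hr)
  | succ n IH =>
    intro R _ _ _ L x hlen hL hx hwr G hG r hr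
    obtain ⟨a, L', rfl⟩ : ∃ a L', L = a :: L' := by
      cases L with
      | nil => simp at hlen
      | cons a L' => exact ⟨a, L', rfl⟩
    have hlen' : L'.length = n := by simpa using hlen
    have ha : a ∈ maximalIdeal R := hL a (by simp)
    have hL' : ∀ r ∈ L', r ∈ maximalIdeal R := fun r hrm => hL r (by simp [hrm])
    have hatop : Ideal.span {a} ≠ ⊤ := by
      intro htop
      exact Ideal.IsMaximal.ne_top (IsLocalRing.maximalIdeal.isMaximal R)
        (top_le_iff.mp (htop ▸ (Ideal.span_le.mpr (by simpa using ha))))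
    have hwr' : IsWeaklyRegular R (a :: (L' ++ [x])) := by
      rwa [← List.cons_append]
    -- instances on the quotient ring
    haveI hql : IsLocalRing (R ⧸ Ideal.span {a}) := quotient_isLocalRing hatop
    haveI hqn : IsNoetherianRing (R ⧸ Ideal.span {a}) :=
      isNoetherianRing_of_surjective R _ (Ideal.Quotient.mk _) Ideal.Quotient.mk_surjective
    set mk := Ideal.Quotient.mk (Ideal.span {a}) with hmk
    -- the quotient step: if u*x ∈ span(H) ⊔ (a) then u ∈ span(H) ⊔ (a)
    have step : ∀ (H : Set (List R)), (∀ l ∈ H, l.Sublist L') → ∀ u : R,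
        u * x ∈ Ideal.span (List.prod '' H) ⊔ Ideal.span {a} →
        u ∈ Ideal.span (List.prod '' H) ⊔ Ideal.span {a} := by
      intro H hH u hu
      have himg : List.prod '' ((List.map ⇑mk) '' H) = ⇑mk '' (List.prod '' H) := by
        rw [← Set.image_comp, ← Set.image_comp]
        apply Set.image_congr'
        intro l
        exact (map_list_prod mk l).symm
      have hspan : Ideal.span (List.prod '' ((List.map ⇑mk) '' H))
          = Ideal.map mk (Ideal.span (List.prod '' H)) := by
        rw [himg, Ideal.map_span]
      have happ := IH (R := R ⧸ Ideal.span {a}) (L'.map ⇑mk) (mk x)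
        (by simp [hlen'])
        (fun r hrm => by
          obtain ⟨r₀, hr₀, rfl⟩ := List.mem_map.mp hrm
          exact mk_mem_maximalIdeal hatop (hL' r₀ hr₀))
        (mk_mem_maximalIdeal hatop hx)
        (by
          have := wr_quotient hwr'
          rwa [List.map_append, List.map_singleton] at this)
        ((List.map ⇑mk) '' H)
        (fun l hl => by
          obtain ⟨l₀, hl₀, rfl⟩ := hl
          exact List.Sublist.map _ (hH l₀ hl₀))
        (mk u)
        (by
          rw [← _root_.map_mul, hspan, mem_quot_span_iff]
          exact hu)
      rw [hspan, mem_quot_span_iff] at happ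
      exact happ
    -- the colon-by-a step via permutation
    have colA : ∀ (H : Set (List R)), (∀ l ∈ H, l.Sublist L') → ∀ u : R,
        u * a ∈ Ideal.span (List.prod '' H) → u ∈ Ideal.span (List.prod '' H) := by
      intro H hH u hu
      have hpre : IsWeaklyRegular R (a :: L') := by
        have := (isWeaklyRegular_append_iff R (a :: L') [x]).mp (by rwa [List.cons_append])
        exact this.1
      have hperm : IsWeaklyRegular R (L' ++ [a]) :=
        IsLocalRing.isWeaklyRegular_of_perm_of_subset_maximalIdeal hpre
          (List.perm_append_singleton a L').symm
          (fun r hrm => hL r (by simpa using hrm))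
      exact IH L' a hlen' hL' ha hperm H hH u hu
    -- decompose G
    set G₀ : Set (List R) := {l ∈ G | l.Sublist L'} with hG₀def
    set G₁ : Set (List R) := {t | a :: t ∈ G} with hG₁def
    set A := Ideal.span (List.prod '' G₀) with hA
    set B := Ideal.span (List.prod '' G₁) with hB
    set J := Ideal.span (List.prod '' G) with hJ
    have hG₀sub : ∀ l ∈ G₀, l.Sublist L' := fun l hl => hl.2
    have hG₁sub : ∀ t ∈ G₁, t.Sublist L' := fun t ht =>
      (List.cons_sublist_cons).mp (hG _ ht)
    have hAJ : A ≤ J := Ideal.span_mono (Set.image_mono (fun l hl => hl.1))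
    have haBJ : Ideal.span {a} * B ≤ J := by
      rw [Ideal.span_singleton_mul_le_iff]
      intro z hz
      refine Submodule.span_induction ?_ ?_ ?_ ?_ hz
      · rintro y ⟨t, ht, rfl⟩
        exact Ideal.subset_span ⟨a :: t, ht, by simp⟩
      · simp
      · intro y z _ _ hy hz
        rw [mul_add]; exact Ideal.add_mem _ hy hz
      · intro c y _ hy
        rw [smul_eq_mul]
        have : a * (c * y) = c * (a * y) := by ring
        rw [this]
        exact Ideal.mul_mem_left _ _ hy
    have hJle : J ≤ A ⊔ Ideal.span {a} * B := by
      rw [hJ, Ideal.span_le]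
      rintro y ⟨l, hl, rfl⟩
      rcases List.sublist_cons_iff.mp (hG l hl) with h1 | ⟨t, rfl, ht⟩
      · exact Submodule.mem_sup_left (Ideal.subset_span ⟨l, ⟨hl, h1⟩, rfl⟩)
      · refine Submodule.mem_sup_right ?_
        rw [List.prod_cons]
        exact Ideal.mem_span_singleton_mul.mpr ⟨t.prod, Ideal.subset_span ⟨t, hl, rfl⟩, rfl⟩
    -- M = A ⊔ B is a monomial ideal in L'
    have hMspan : A ⊔ B = Ideal.span (List.prod '' (G₀ ∪ G₁)) := by
      rw [Set.image_union, Ideal.span_union]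
    have hMsub : ∀ l ∈ G₀ ∪ G₁, l.Sublist L' := by
      rintro l (hl | hl)
      · exact hG₀sub l hl
      · exact hG₁sub l hl
    -- Step 1: r ∈ A ⊔ (a)
    have h1 : r ∈ A ⊔ Ideal.span {a} := by
      apply step G₀ hG₀sub
      refine le_trans hJle (sup_le le_sup_left (le_trans Ideal.mul_le_left le_sup_right)) hr
    obtain ⟨α, hα, t, htmem, hrsum⟩ := Submodule.mem_sup.mp h1
    obtain ⟨s, rfl⟩ := Ideal.mem_span_singleton'.mp htmem
    -- Step 2: s * x ∈ A ⊔ B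
    have h2 : s * x ∈ A ⊔ B := by
      have hsa : (s * a) * x ∈ A ⊔ Ideal.span {a} * B := by
        apply hJle
        have : (s * a) * x = r * x - α * x := by rw [← hrsum]; ring
        rw [this]
        exact Ideal.sub_mem _ hr (hAJ (Ideal.mul_mem_right _ _ hα))
      obtain ⟨α', hα', w, hw, heq⟩ := Submodule.mem_sup.mp hsa
      obtain ⟨b', hb', hweq⟩ := Ideal.mem_span_singleton_mul.mp hw
      have hsxa : (s * x - b') * a ∈ A := by
        have : (s * x - b') * a = (s * a) * x - a * b' := by ring
        rw [this, hweq, ← heq]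
        simpa using hα'
      have := colA G₀ hG₀sub _ hsxa
      have hfin : s * x = (s * x - b') + b' := by ring
      rw [hfin]
      exact Submodule.add_mem _ (Submodule.mem_sup_left this) (Submodule.mem_sup_right hb')
    -- Step 3: iterate to get s ∈ (A ⊔ B) ⊔ (a^k) for all k
    have h3 : ∀ k : ℕ, ∀ u : R, u * x ∈ A ⊔ B → u ∈ (A ⊔ B) ⊔ Ideal.span {a ^ k} := by
      intro k
      induction k with
      | zero =>
        intro u _
        have : Ideal.span {a ^ 0} = ⊤ := by
          simp [Ideal.span_singleton_one]
        rw [this, sup_top_eq]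
        trivial
      | succ k ih =>
        intro u hu
        have hstep : u ∈ (A ⊔ B) ⊔ Ideal.span {a} := by
          rw [hMspan] at hu ⊢
          exact step (G₀ ∪ G₁) hMsub u (Submodule.mem_sup_left hu)
        obtain ⟨μ, hμ, w, hwmem, husum⟩ := Submodule.mem_sup.mp hstep
        obtain ⟨v, rfl⟩ := Ideal.mem_span_singleton'.mp hwmem
        have hva : (v * x) * a ∈ A ⊔ B := by
          have : (v * x) * a = u * x - μ * x := by rw [← husum]; ring
          rw [this]
          exact Submodule.sub_mem _ hu (Ideal.mul_mem_right _ _ hμ)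
        have hvx : v * x ∈ A ⊔ B := by
          rw [hMspan] at hva ⊢
          exact colA (G₀ ∪ G₁) hMsub _ hva
        obtain ⟨μ', hμ', w', hw'mem, hvsum⟩ := Submodule.mem_sup.mp (ih v hvx)
        obtain ⟨c, rfl⟩ := Ideal.mem_span_singleton'.mp hw'mem
        have : u = (μ + μ' * a) + c * a ^ (k + 1) := by
          rw [← husum, ← hvsum]; ring
        rw [this]
        refine Submodule.add_mem _ (Submodule.mem_sup_left ?_) (Submodule.mem_sup_right ?_)
        · exact Submodule.add_mem _ hμ (Ideal.mul_mem_right _ _ hμ')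
        · exact Ideal.mem_span_singleton'.mpr ⟨c, rfl⟩
    -- Step 4: Krull intersection
    have h4 : s ∈ A ⊔ B := krull_trick ha (fun k => h3 k s h2)
    -- Step 5: conclude
    obtain ⟨α'', hα'', b'', hb'', hssum⟩ := Submodule.mem_sup.mp h4
    have : r = α + α'' * a + a * b'' := by rw [← hrsum, ← hssum]; ring
    rw [this]
    refine Ideal.add_mem _ (Ideal.add_mem _ (hAJ hα) (hAJ (Ideal.mul_mem_right _ _ hα''))) ?_
    exact haBJ (Ideal.mem_span_singleton_mul.mpr ⟨b'', hb'', rfl⟩)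

lemma filter_map_prod_eq (n : ℕ) {R : Type u} [CommRing R] (g : Fin n → R) (S : Finset (Fin n)) :
    (((List.finRange n).filter (· ∈ S)).map g).prod = ∏ i ∈ S, g i := by
  have h1 : ((List.finRange n).filter (· ∈ S) : Multiset (Fin n)) = S.val := by
    have h2 := congrArg Finset.val (Finset.filter_univ_mem S)
    rw [Finset.filter_val] at h2
    rw [← h2]
    congr 1
  calc (((List.finRange n).filter (· ∈ S)).map g).prod
      = ((((List.finRange n).filter (· ∈ S) : Multiset (Fin n))).map g).prod := by simp
    _ = (S.val.map g).prod := by rw [h1]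
    _ = ∏ i ∈ S, g i := rfl

end AuxiliaryLemmas

/-- Let `R` be a local (Noetherian) commutative ring and `f₁,…,fₙ` a regular sequence in
its maximal ideal.  If `I` and `J` are ideals generated by square-free monomials in
`f₁,…,f_{n-1}`, then `(I·fₙ + J) : fₙ = I + J`. -/
theorem stmt6 {R : Type*} [CommRing R] [IsLocalRing R] [IsNoetherianRing R] {n : ℕ}
    (f : Fin (n + 1) → R) (hmem : ∀ i, f i ∈ IsLocalRing.maximalIdeal R)
    (hreg : RingTheory.Sequence.IsRegular R (List.ofFn f))
    (I J : Ideal R)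
    (hI : IsSquareFreeMonomialIdeal (fun i : Fin n => f i.castSucc) I)
    (hJ : IsSquareFreeMonomialIdeal (fun i : Fin n => f i.castSucc) J) :
    (I * Ideal.span {f (Fin.last n)} + J).colon (Ideal.span {f (Fin.last n)}) = I + J := by
  obtain ⟨SJ, hJeq⟩ := hJ
  set g : Fin n → R := fun i => f i.castSucc with hg
  set x := f (Fin.last n) with hxdef
  set L := List.ofFn g with hL
  set G : Set (List R) :=
    (fun S : Finset (Fin n) => ((List.finRange n).filter (· ∈ S)).map g) '' SJ with hGdef
  have hGsub : ∀ l ∈ G, l.Sublist L := by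
    rintro l ⟨S, _, rfl⟩
    rw [hL, List.ofFn_eq_map]
    exact List.Sublist.map g List.filter_sublist
  have hJG : J = Ideal.span (List.prod '' G) := by
    rw [hJeq]
    congr 1
    rw [hGdef, Set.image_image]
    apply Set.image_congr'
    intro S
    exact (filter_map_prod_eq n g S).symm
  have hwr : IsWeaklyRegular R (L ++ [x]) := by
    have := hreg.toIsWeaklyRegular
    rwa [List.ofFn_succ', List.concat_eq_append] at this
  have hLm : ∀ r ∈ L, r ∈ maximalIdeal R := by
    intro r hrm
    rw [hL, List.mem_ofFn] at hrm
    obtain ⟨i, rfl⟩ := hrm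
    exact hmem _
  have hlen : L.length = n := by simp [hL]
  apply le_antisymm
  · intro z hz
    rw [Ideal.mem_colon_span_singleton] at hz
    rw [Submodule.add_eq_sup] at hz
    obtain ⟨p, hp, j, hj, hzx⟩ := Submodule.mem_sup.mp hz
    have hp' : p ∈ Ideal.span {x} * I := by rwa [mul_comm] at hp
    obtain ⟨i₀, hi₀, rfl⟩ := Ideal.mem_span_singleton_mul.mp hp'
    have hzj : (z - i₀) * x ∈ Ideal.span (List.prod '' G) := by
      rw [← hJG]
      have heq : (z - i₀) * x = z * x - x * i₀ := by ring
      rw [heq, ← hzx]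
      simpa using hj
    have hkey := key_s6 n L x hlen hLm (hmem _) hwr G hGsub _ hzj
    rw [← hJG] at hkey
    have heq : z = i₀ + (z - i₀) := by ring
    rw [Submodule.add_eq_sup, heq]
    exact Submodule.add_mem _ (Submodule.mem_sup_left hi₀) (Submodule.mem_sup_right hkey)
  · intro z hz
    rw [Submodule.add_eq_sup] at hz
    rw [Ideal.mem_colon_span_singleton, Submodule.add_eq_sup]
    obtain ⟨i, hi, j, hj, rfl⟩ := Submodule.mem_sup.mp hz
    have heq : (i + j) * x = i * x + j * x := by ring
    rw [heq]
    exact Submodule.add_mem _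
      (Submodule.mem_sup_left (Ideal.mul_mem_mul hi (Ideal.subset_span rfl)))
      (Submodule.mem_sup_right (Ideal.mul_mem_right _ _ hj))
end

section
/- Let $R$ be a local commutative ring and $f_1, \ldots, f_n$ a regular sequence in the maximal ideal. Suppose $I_1, I_2, J_1, J_2$ are ideals generated by square-free monomials in $f_1, \ldots, f_{n-1}$. Then $(I_1 f_n + I_2) \cap (J_1 f_n + J_2) = (I_1 \cap J_1 + I_1 \cap J_2 + I_2 \cap J_1) f_n + I_2 \cap J_2$. -/
open RingTheory.Sequence Ideal Pointwise

namespace SFM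

variable {R : Type*} [CommRing R]

/-! ### Monomials and square-free monomial ideals -/

def mon {m : ℕ} (v : Fin m → R) (S : Finset (Fin m)) : R := ∏ i ∈ S, v i

def sf {m : ℕ} (v : Fin m → R) (𝒮 : Set (Finset (Fin m))) : Ideal R :=
  Ideal.span (mon v '' 𝒮)

lemma sf_union {m : ℕ} (v : Fin m → R) (𝒮 𝒯 : Set (Finset (Fin m))) :
    sf v (𝒮 ∪ 𝒯) = sf v 𝒮 ⊔ sf v 𝒯 := by
  rw [sf, Set.image_union, Ideal.span_union]; rfl

lemma span_mul_singleton (s : Set R) (a : R) :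
    Ideal.span s * Ideal.span {a} = Ideal.span ((fun g => g * a) '' s) := by
  rw [Ideal.span_mul_span', Set.mul_singleton]

/-- preimage of a finset of `Fin (m+1)` under `castSucc` -/
noncomputable def down {m : ℕ} (S : Finset (Fin (m + 1))) : Finset (Fin m) :=
  S.preimage Fin.castSucc (Set.injOn_of_injective (Fin.castSucc_injective m))

lemma mem_down {m : ℕ} {S : Finset (Fin (m + 1))} {i : Fin m} :
    i ∈ down S ↔ i.castSucc ∈ S := Finset.mem_preimage

lemma down_union {m : ℕ} (S T : Finset (Fin (m + 1))) :
    down (S ∪ T) = down S ∪ down T := by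
  ext i; simp [mem_down]

lemma image_castSucc_down {m : ℕ} (S : Finset (Fin (m + 1))) :
    (down S).image Fin.castSucc = S.erase (Fin.last m) := by
  ext i
  simp only [Finset.mem_image, Finset.mem_erase, mem_down]
  constructor
  · rintro ⟨j, hj, rfl⟩
    exact ⟨Fin.exists_castSucc_eq.mp ⟨j, rfl⟩, hj⟩
  · rintro ⟨hne, hi⟩
    obtain ⟨j, rfl⟩ := Fin.exists_castSucc_eq.mpr hne
    exact ⟨j, hi, rfl⟩

lemma mon_down {m : ℕ} (v : Fin (m + 1) → R) (S : Finset (Fin (m + 1))) :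
    mon (fun i => v i.castSucc) (down S) = ∏ i ∈ S.erase (Fin.last m), v i := by
  rw [← image_castSucc_down, Finset.prod_image
    (fun x _ y _ h => Fin.castSucc_injective m h)]
  rfl

lemma mon_of_not_mem_last {m : ℕ} (v : Fin (m + 1) → R) (S : Finset (Fin (m + 1)))
    (h : Fin.last m ∉ S) : mon (fun i => v i.castSucc) (down S) = mon v S := by
  rw [mon_down, Finset.erase_eq_of_notMem h]; rfl

lemma mon_of_mem_last {m : ℕ} (v : Fin (m + 1) → R) (S : Finset (Fin (m + 1)))
    (h : Fin.last m ∈ S) :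
    mon (fun i => v i.castSucc) (down S) * v (Fin.last m) = mon v S := by
  rw [mon_down, mul_comm]
  exact Finset.mul_prod_erase S v h

/-- Decomposition of a square-free monomial ideal at the last variable. -/
lemma sf_decomp {m : ℕ} (v : Fin (m + 1) → R) (𝒮 : Set (Finset (Fin (m + 1)))) :
    sf v 𝒮 = sf (fun i => v i.castSucc) (down '' {S ∈ 𝒮 | Fin.last m ∈ S}) *
        Ideal.span {v (Fin.last m)} ⊔
      sf (fun i => v i.castSucc) (down '' {S ∈ 𝒮 | Fin.last m ∉ S}) := by
  have h𝒮 : 𝒮 = {S ∈ 𝒮 | Fin.last m ∈ S} ∪ {S ∈ 𝒮 | Fin.last m ∉ S} := by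
    ext S; by_cases h : Fin.last m ∈ S <;> simp [h]
  conv_lhs => rw [h𝒮, sf_union]
  congr 1
  · simp only [sf]
    rw [span_mul_singleton, ← Set.image_comp, ← Set.image_comp]
    congr 1
    apply Set.image_congr
    rintro S ⟨-, hS⟩
    exact (mon_of_mem_last v S hS).symm
  · simp only [sf]
    rw [← Set.image_comp]
    congr 1
    apply Set.image_congr
    rintro S ⟨-, hS⟩
    exact (mon_of_not_mem_last v S hS).symm

/-! ### Regular sequences modulo an ideal -/

def WReg (J : Ideal R) (l : List R) : Prop := IsWeaklyRegular (R ⧸ J) l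

lemma wreg_bot {l : List R} (h : IsWeaklyRegular R l) : WReg (⊥ : Ideal R) l :=
  ((Submodule.quotEquivOfEqBot (⊥ : Ideal R) rfl).isWeaklyRegular_congr l).mpr h

lemma wreg_nzd {J : Ideal R} {a : R} {l : List R} (h : WReg J (a :: l)) :
    ∀ x, x * a ∈ J → x ∈ J := by
  rw [WReg, isWeaklyRegular_cons_iff] at h
  intro x hx
  have h2 : a • (Ideal.Quotient.mk J x) = a • (0 : R ⧸ J) := by
    rw [smul_zero]
    show a • (Ideal.Quotient.mk J x) = 0
    rw [← Ideal.Quotient.mk_eq_mk, ← Submodule.Quotient.mk_smul, smul_eq_mul,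
      Ideal.Quotient.mk_eq_mk, Ideal.Quotient.eq_zero_iff_mem]
    rwa [mul_comm] at hx
  have := h.1 h2
  rwa [← Ideal.Quotient.eq_zero_iff_mem]

lemma map_span_singleton_mkQ (J : Ideal R) (a : R) :
    Submodule.map (Submodule.mkQ J) (Ideal.span {a}) = a • (⊤ : Submodule R (R ⧸ J)) := by
  ext x
  have hx : x ∈ a • (⊤ : Submodule R (R ⧸ J)) ↔
      x ∈ a • ((⊤ : Submodule R (R ⧸ J)) : Set (R ⧸ J)) := by
    rw [← Submodule.coe_pointwise_smul, SetLike.mem_coe]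
  rw [hx, Set.mem_smul_set]
  simp only [Submodule.mem_map, Ideal.mem_span_singleton, Submodule.mem_top, SetLike.mem_coe]
  constructor
  · rintro ⟨y, ⟨c, rfl⟩, rfl⟩
    exact ⟨Submodule.mkQ J c, trivial, by rw [← map_smul, smul_eq_mul]⟩
  · rintro ⟨z, -, rfl⟩
    obtain ⟨c, rfl⟩ := Submodule.mkQ_surjective J z
    exact ⟨a * c, ⟨c, rfl⟩, by rw [← map_smul, smul_eq_mul]⟩

lemma wreg_tail {J : Ideal R} {a : R} {l : List R} (h : WReg J (a :: l)) :
    WReg (J ⊔ Ideal.span {a}) l := by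
  rw [WReg, isWeaklyRegular_cons_iff] at h
  have e : QuotSMulTop a (R ⧸ J) ≃ₗ[R] R ⧸ (J ⊔ Ideal.span {a}) :=
    (Submodule.quotEquivOfEq _ _ (map_span_singleton_mkQ J a).symm).trans
      (Submodule.quotientQuotientEquivQuotientSup J (Ideal.span {a}))
  exact (e.isWeaklyRegular_congr l).mp h.2

lemma wreg_prefix {J : Ideal R} {l₁ l₂ : List R} (h : WReg J (l₁ ++ l₂)) : WReg J l₁ :=
  ((isWeaklyRegular_append_iff _ l₁ l₂).mp h).1

lemma wreg_perm [IsLocalRing R] [IsNoetherianRing R] {J : Ideal R} {l l' : List R}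
    (h : WReg J l) (hp : l.Perm l') (hm : ∀ x ∈ l, x ∈ IsLocalRing.maximalIdeal R) :
    WReg J l' :=
  IsLocalRing.isWeaklyRegular_of_perm_of_subset_maximalIdeal h hp hm


/-! ### The colon lemma -/

section LemA

variable [IsLocalRing R] [IsNoetherianRing R]

lemma lemA : ∀ (m : ℕ) (J : Ideal R) (v : Fin m → R) (a : R),
    (∀ i, v i ∈ IsLocalRing.maximalIdeal R) → a ∈ IsLocalRing.maximalIdeal R →
    WReg J (List.ofFn v ++ [a]) →
    ∀ (𝒮 : Set (Finset (Fin m))) (x : R), x * a ∈ J ⊔ sf v 𝒮 → x ∈ J ⊔ sf v 𝒮 := by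
  intro m
  induction m with
  | zero =>
    intro J v a hv ha hw 𝒮 x hx
    by_cases h𝒮 : 𝒮 = ∅
    · subst h𝒮
      rw [sf, Set.image_empty, Ideal.span_empty, sup_bot_eq] at hx ⊢
      rw [List.ofFn_zero, List.nil_append] at hw
      exact wreg_nzd hw x hx
    · obtain ⟨S, hS⟩ := Set.nonempty_iff_ne_empty.mpr h𝒮
      have hS' : S = (∅ : Finset (Fin 0)) := Finset.eq_empty_of_isEmpty S
      have h1 : (1 : R) ∈ sf v 𝒮 :=
        Ideal.subset_span ⟨S, hS, by simp [mon, hS']⟩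
      have htop : J ⊔ sf v 𝒮 = ⊤ :=
        (Ideal.eq_top_iff_one _).mpr (Ideal.mem_sup_right h1)
      rw [htop]; exact Submodule.mem_top
  | succ m IH =>
    intro J v a hv ha hw 𝒮 x hx
    set t := v (Fin.last m) with ht
    set v' : Fin m → R := fun i => v i.castSucc with hv'def
    have hv'mem : ∀ i, v' i ∈ IsLocalRing.maximalIdeal R := fun i => hv i.castSucc
    set 𝒮₁ := down '' {S ∈ 𝒮 | Fin.last m ∈ S} with h𝒮₁
    set 𝒮₂ := down '' {S ∈ 𝒮 | Fin.last m ∉ S} with h𝒮₂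
    set P := sf v' 𝒮₁ with hP
    set Q := sf v' 𝒮₂ with hQ
    have hdec : sf v 𝒮 = P * Ideal.span {t} ⊔ Q := sf_decomp v 𝒮
    have hofn : List.ofFn v = List.ofFn v' ++ [t] := by
      rw [List.ofFn_succ', List.concat_eq_append]
    have hmem : ∀ y ∈ List.ofFn v ++ [a], y ∈ IsLocalRing.maximalIdeal R := by
      intro y hy
      rcases List.mem_append.mp hy with h | h
      · obtain ⟨i, rfl⟩ := List.mem_ofFn.mp h
        exact hv i
      · rw [List.mem_singleton] at h
        subst h; exact ha
    have hw1 : WReg (J ⊔ Ideal.span {t}) (List.ofFn v' ++ [a]) := by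
      apply wreg_tail
      apply wreg_perm hw ?_ hmem
      rw [hofn, List.append_assoc]
      exact List.perm_middle
    have hw2 : WReg J (List.ofFn v' ++ [t]) := by
      rw [← hofn]
      exact wreg_prefix (l₂ := [a]) hw
    have hw3 : WReg J (List.ofFn v' ++ [a]) := by
      apply wreg_prefix (l₂ := [t])
      apply wreg_perm hw ?_ hmem
      rw [hofn, List.append_assoc, List.append_assoc]
      exact List.Perm.append_left _ (List.Perm.swap a t [])
    -- Step 1: reduce modulo t
    have hle : J ⊔ sf v 𝒮 ≤ (J ⊔ Ideal.span {t}) ⊔ Q := by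
      rw [hdec]
      refine sup_le (le_sup_of_le_left le_sup_left) (sup_le ?_ le_sup_right)
      exact le_sup_of_le_left (le_sup_of_le_right Ideal.mul_le_right)
    have hx2 : x ∈ (J ⊔ Ideal.span {t}) ⊔ Q :=
      IH (J ⊔ Ideal.span {t}) v' a hv'mem ha hw1 𝒮₂ x (hle hx)
    obtain ⟨y1, hy1, q, hq, hxe⟩ := Submodule.mem_sup.mp hx2
    obtain ⟨j, hj, s, hs, hy1e⟩ := Submodule.mem_sup.mp hy1
    obtain ⟨c, hc⟩ := Ideal.mem_span_singleton'.mp hs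
    have hxeq : x = j + c * t + q := by rw [← hxe, ← hy1e, hc]
    -- Step 2: extract the coefficient of t
    have hxa : x * a ∈ J ⊔ (P * Ideal.span {t} ⊔ Q) := by rw [← hdec]; exact hx
    have h3 : (c * a) * t ∈ J ⊔ (P * Ideal.span {t} ⊔ Q) := by
      have he : (c * a) * t = x * a - j * a - q * a := by rw [hxeq]; ring
      rw [he]
      refine sub_mem (sub_mem hxa ?_) ?_
      · exact Ideal.mem_sup_left (Ideal.mul_mem_right a J hj)
      · exact Ideal.mem_sup_right (Ideal.mem_sup_right (Ideal.mul_mem_right a Q hq))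
    obtain ⟨j', hj', z, hz, he⟩ := Submodule.mem_sup.mp h3
    obtain ⟨w, hwP, q', hq', he2⟩ := Submodule.mem_sup.mp hz
    obtain ⟨p, hp, hpe⟩ := Ideal.mem_mul_span_singleton.mp hwP
    have h4 : (c * a - p) * t ∈ J ⊔ Q := by
      have : (c * a - p) * t = j' + q' := by
        rw [sub_mul]
        rw [← he, ← he2, hpe]; ring
      rw [this]
      exact Submodule.add_mem _ (Ideal.mem_sup_left hj') (Ideal.mem_sup_right hq')
    have h5 : c * a - p ∈ J ⊔ Q := IH J v' t hv'mem (hv (Fin.last m)) hw2 𝒮₂ _ h4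
    have h6 : c * a ∈ J ⊔ sf v' (𝒮₁ ∪ 𝒮₂) := by
      rw [sf_union]
      have : c * a = (c * a - p) + p := by ring
      rw [this]
      refine Submodule.add_mem _ ?_ (Ideal.mem_sup_right (Ideal.mem_sup_left hp))
      exact sup_le_sup_left le_sup_right J h5
    have h7 : c ∈ J ⊔ (P ⊔ Q) := by
      have := IH J v' a hv'mem ha hw3 (𝒮₁ ∪ 𝒮₂) c h6
      rwa [sf_union] at this
    -- Step 3: reassemble
    rw [hxeq, hdec]
    refine Submodule.add_mem _ (Submodule.add_mem _ (Ideal.mem_sup_left hj) ?_)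
      (Ideal.mem_sup_right (Ideal.mem_sup_right hq))
    obtain ⟨j'', hj'', z', hz', he3⟩ := Submodule.mem_sup.mp h7
    obtain ⟨p'', hp'', q'', hq'', he4⟩ := Submodule.mem_sup.mp hz'
    have : c * t = j'' * t + (p'' * t + q'' * t) := by rw [← he3, ← he4]; ring
    rw [this]
    refine Submodule.add_mem _ (Ideal.mem_sup_left (Ideal.mul_mem_right t J hj'')) ?_
    refine Ideal.mem_sup_right (Submodule.add_mem _ ?_ ?_)
    · exact Ideal.mem_sup_left (Ideal.mem_mul_span_singleton.mpr ⟨p'', hp'', rfl⟩)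
    · exact Ideal.mem_sup_right (Ideal.mul_mem_right t Q hq'')

end LemA

/-! ### The core intersection computation -/

lemma core (I₁ I₂ J₁ J₂ : Ideal R) (a : R)
    (hA : ∀ x, x * a ∈ I₂ ⊔ J₂ → x ∈ I₂ ⊔ J₂)
    (hB : (I₁ ⊔ I₂) ⊓ (J₁ ⊔ J₂) = ((I₁ ⊓ J₁ ⊔ I₁ ⊓ J₂) ⊔ I₂ ⊓ J₁) ⊔ I₂ ⊓ J₂) :
    (I₁ * Ideal.span {a} ⊔ I₂) ⊓ (J₁ * Ideal.span {a} ⊔ J₂) =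
      ((I₁ ⊓ J₁ ⊔ I₁ ⊓ J₂) ⊔ I₂ ⊓ J₁) * Ideal.span {a} ⊔ I₂ ⊓ J₂ := by
  apply le_antisymm
  · intro x hx
    obtain ⟨hx1, hx2⟩ := Submodule.mem_inf.mp hx
    obtain ⟨w, hw, b, hb, hxe⟩ := Submodule.mem_sup.mp hx1
    obtain ⟨a₁, ha₁, hae⟩ := Ideal.mem_mul_span_singleton.mp hw
    obtain ⟨w', hw', d, hd, hxe'⟩ := Submodule.mem_sup.mp hx2
    obtain ⟨c₁, hc₁, hce⟩ := Ideal.mem_mul_span_singleton.mp hw'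
    have hx3 : x = a₁ * a + b := by rw [← hxe, ← hae]
    have hx4 : x = c₁ * a + d := by rw [← hxe', ← hce]
    have key : (a₁ - c₁) * a = d - b := by linear_combination hx4 - hx3
    have hmem : a₁ - c₁ ∈ I₂ ⊔ J₂ := by
      refine hA _ ?_
      rw [key]
      exact sub_mem (Ideal.mem_sup_right hd) (Ideal.mem_sup_left hb)
    obtain ⟨u, hu, v6, hv6, huv⟩ := Submodule.mem_sup.mp hmem
    have hcv : a₁ - u = c₁ + v6 := by linear_combination -huv
    have he1 : a₁ - u ∈ I₁ ⊔ I₂ :=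
      sub_mem (Ideal.mem_sup_left ha₁) (Ideal.mem_sup_right hu)
    have he2 : a₁ - u ∈ J₁ ⊔ J₂ := by
      rw [hcv]
      exact Submodule.add_mem _ (Ideal.mem_sup_left hc₁) (Ideal.mem_sup_right hv6)
    have he : a₁ - u ∈ ((I₁ ⊓ J₁ ⊔ I₁ ⊓ J₂) ⊔ I₂ ⊓ J₁) ⊔ I₂ ⊓ J₂ := by
      rw [← hB]; exact Submodule.mem_inf.mpr ⟨he1, he2⟩
    obtain ⟨z, hz, w₄, hw₄, hze⟩ := Submodule.mem_sup.mp he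
    have ha₁e : a₁ = z + w₄ + u := by linear_combination -hze
    have hxfin : x = z * a + (w₄ * a + (u * a + b)) := by
      rw [hx3, ha₁e]; ring
    rw [hxfin]
    refine Submodule.add_mem _ ?_ (Submodule.add_mem _ ?_ ?_)
    · exact Ideal.mem_sup_left (Ideal.mem_mul_span_singleton.mpr ⟨z, hz, rfl⟩)
    · exact Ideal.mem_sup_right (Ideal.mul_mem_right a _ hw₄)
    · refine Ideal.mem_sup_right (Submodule.mem_inf.mpr ⟨?_, ?_⟩)
      · exact Submodule.add_mem _ (Ideal.mul_mem_right a _ hu) hb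
      · have hub : u * a + b = d - v6 * a := by
          linear_combination -hx3 + hx4 - a * hcv
        rw [hub]
        exact sub_mem hd (Ideal.mul_mem_right a _ hv6)
  · apply le_inf
    · refine sup_le ?_ (le_sup_of_le_right inf_le_left)
      rw [Ideal.sup_mul, Ideal.sup_mul]
      refine sup_le (sup_le ?_ ?_) ?_
      · exact le_sup_of_le_left (Ideal.mul_mono_left inf_le_left)
      · exact le_sup_of_le_left (Ideal.mul_mono_left inf_le_left)
      · exact le_sup_of_le_right (le_trans Ideal.mul_le_left inf_le_left)
    · refine sup_le ?_ (le_sup_of_le_right inf_le_right)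
      rw [Ideal.sup_mul, Ideal.sup_mul]
      refine sup_le (sup_le ?_ ?_) ?_
      · exact le_sup_of_le_left (Ideal.mul_mono_left inf_le_right)
      · exact le_sup_of_le_right (le_trans Ideal.mul_le_left inf_le_right)
      · exact le_sup_of_le_left (Ideal.mul_mono_left inf_le_right)

/-! ### Set-family identities for the union operation -/

section Families

variable {m : ℕ}

lemma fam_not_last (𝒮 𝒯 : Set (Finset (Fin (m + 1)))) :
    down '' {U ∈ Set.image2 (· ∪ ·) 𝒮 𝒯 | Fin.last m ∉ U} =
      Set.image2 (· ∪ ·) (down '' {S ∈ 𝒮 | Fin.last m ∉ S})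
        (down '' {T ∈ 𝒯 | Fin.last m ∉ T}) := by
  ext A
  simp only [Set.mem_image, Set.mem_image2, Set.mem_setOf_eq]
  constructor
  · rintro ⟨U, ⟨⟨S, hS, T, hT, rfl⟩, hlast⟩, rfl⟩
    rw [Finset.mem_union] at hlast
    push_neg at hlast
    exact ⟨down S, ⟨S, ⟨hS, hlast.1⟩, rfl⟩, down T, ⟨T, ⟨hT, hlast.2⟩, rfl⟩,
      (down_union S T).symm⟩
  · rintro ⟨A, ⟨S, ⟨hS, h1⟩, rfl⟩, B, ⟨T, ⟨hT, h2⟩, rfl⟩, rfl⟩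
    exact ⟨S ∪ T, ⟨⟨S, hS, T, hT, rfl⟩, by simp [Finset.mem_union, h1, h2]⟩,
      down_union S T⟩

lemma fam_last (𝒮 𝒯 : Set (Finset (Fin (m + 1)))) :
    down '' {U ∈ Set.image2 (· ∪ ·) 𝒮 𝒯 | Fin.last m ∈ U} =
      (Set.image2 (· ∪ ·) (down '' {S ∈ 𝒮 | Fin.last m ∈ S})
          (down '' {T ∈ 𝒯 | Fin.last m ∈ T}) ∪
        Set.image2 (· ∪ ·) (down '' {S ∈ 𝒮 | Fin.last m ∈ S})
          (down '' {T ∈ 𝒯 | Fin.last m ∉ T})) ∪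
      Set.image2 (· ∪ ·) (down '' {S ∈ 𝒮 | Fin.last m ∉ S})
        (down '' {T ∈ 𝒯 | Fin.last m ∈ T}) := by
  ext A
  simp only [Set.mem_union, Set.mem_image, Set.mem_image2, Set.mem_setOf_eq]
  constructor
  · rintro ⟨U, ⟨⟨S, hS, T, hT, rfl⟩, hlast⟩, rfl⟩
    rw [Finset.mem_union] at hlast
    by_cases h1 : Fin.last m ∈ S <;> by_cases h2 : Fin.last m ∈ T
    · exact Or.inl (Or.inl ⟨down S, ⟨S, ⟨hS, h1⟩, rfl⟩, down T, ⟨T, ⟨hT, h2⟩, rfl⟩,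
        (down_union S T).symm⟩)
    · exact Or.inl (Or.inr ⟨down S, ⟨S, ⟨hS, h1⟩, rfl⟩, down T, ⟨T, ⟨hT, h2⟩, rfl⟩,
        (down_union S T).symm⟩)
    · exact Or.inr ⟨down S, ⟨S, ⟨hS, h1⟩, rfl⟩, down T, ⟨T, ⟨hT, h2⟩, rfl⟩,
        (down_union S T).symm⟩
    · exact absurd hlast (by simp [h1, h2])
  · rintro ((⟨A, ⟨S, ⟨hS, h1⟩, rfl⟩, B, ⟨T, ⟨hT, h2⟩, rfl⟩, rfl⟩ |
        ⟨A, ⟨S, ⟨hS, h1⟩, rfl⟩, B, ⟨T, ⟨hT, h2⟩, rfl⟩, rfl⟩) |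
        ⟨A, ⟨S, ⟨hS, h1⟩, rfl⟩, B, ⟨T, ⟨hT, h2⟩, rfl⟩, rfl⟩)
    · exact ⟨S ∪ T, ⟨⟨S, hS, T, hT, rfl⟩, Finset.mem_union.mpr (Or.inl h1)⟩,
        down_union S T⟩
    · exact ⟨S ∪ T, ⟨⟨S, hS, T, hT, rfl⟩, Finset.mem_union.mpr (Or.inl h1)⟩,
        down_union S T⟩
    · exact ⟨S ∪ T, ⟨⟨S, hS, T, hT, rfl⟩, Finset.mem_union.mpr (Or.inr h2)⟩,
        down_union S T⟩

end Families

/-! ### The intersection lemma -/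

section LemC

variable [IsLocalRing R] [IsNoetherianRing R]

lemma lemC : ∀ (m : ℕ) (v : Fin m → R),
    (∀ i, v i ∈ IsLocalRing.maximalIdeal R) → IsWeaklyRegular R (List.ofFn v) →
    ∀ 𝒮 𝒯 : Set (Finset (Fin m)),
      sf v 𝒮 ⊓ sf v 𝒯 = sf v (Set.image2 (· ∪ ·) 𝒮 𝒯) := by
  intro m
  induction m with
  | zero =>
    intro v hv hreg 𝒮 𝒯
    have htop : ∀ 𝒰 : Set (Finset (Fin 0)), 𝒰.Nonempty → sf v 𝒰 = ⊤ := by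
      rintro 𝒰 ⟨S, hS⟩
      refine (Ideal.eq_top_iff_one _).mpr ?_
      exact Ideal.subset_span ⟨S, hS, by simp [mon, Finset.eq_empty_of_isEmpty S]⟩
    rcases Set.eq_empty_or_nonempty 𝒮 with h | h
    · simp [sf, h]
    rcases Set.eq_empty_or_nonempty 𝒯 with h' | h'
    · simp [sf, h']
    · rw [htop 𝒮 h, htop 𝒯 h', htop _ (h.image2 h'), top_inf_eq]
  | succ m IH =>
    intro v hv hreg 𝒮 𝒯
    set t := v (Fin.last m) with ht
    set v' : Fin m → R := fun i => v i.castSucc with hv'def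
    have hv'mem : ∀ i, v' i ∈ IsLocalRing.maximalIdeal R := fun i => hv i.castSucc
    have hofn : List.ofFn v = List.ofFn v' ++ [t] := by
      rw [List.ofFn_succ', List.concat_eq_append]
    have hregv' : IsWeaklyRegular R (List.ofFn v') :=
      ((isWeaklyRegular_append_iff R _ [t]).mp (hofn ▸ hreg)).1
    set 𝒮₁ := down '' {S ∈ 𝒮 | Fin.last m ∈ S} with h𝒮₁
    set 𝒮₂ := down '' {S ∈ 𝒮 | Fin.last m ∉ S} with h𝒮₂
    set 𝒯₁ := down '' {T ∈ 𝒯 | Fin.last m ∈ T} with h𝒯₁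
    set 𝒯₂ := down '' {T ∈ 𝒯 | Fin.last m ∉ T} with h𝒯₂
    have hA : ∀ x, x * t ∈ sf v' 𝒮₂ ⊔ sf v' 𝒯₂ → x ∈ sf v' 𝒮₂ ⊔ sf v' 𝒯₂ := by
      intro x hx
      have h0 : sf v' 𝒮₂ ⊔ sf v' 𝒯₂ = (⊥ : Ideal R) ⊔ sf v' (𝒮₂ ∪ 𝒯₂) := by
        rw [sf_union, bot_sup_eq]
      rw [h0] at hx ⊢
      exact lemA m ⊥ v' t hv'mem (hv _) (by rw [← hofn]; exact wreg_bot hreg) _ x hx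
    have hB : (sf v' 𝒮₁ ⊔ sf v' 𝒮₂) ⊓ (sf v' 𝒯₁ ⊔ sf v' 𝒯₂) =
        ((sf v' 𝒮₁ ⊓ sf v' 𝒯₁ ⊔ sf v' 𝒮₁ ⊓ sf v' 𝒯₂) ⊔ sf v' 𝒮₂ ⊓ sf v' 𝒯₁) ⊔
          sf v' 𝒮₂ ⊓ sf v' 𝒯₂ := by
      rw [← sf_union, ← sf_union, IH v' hv'mem hregv',
        IH v' hv'mem hregv' 𝒮₁ 𝒯₁, IH v' hv'mem hregv' 𝒮₁ 𝒯₂,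
        IH v' hv'mem hregv' 𝒮₂ 𝒯₁, IH v' hv'mem hregv' 𝒮₂ 𝒯₂,
        Set.image2_union_left, Set.image2_union_right, Set.image2_union_right,
        sf_union, sf_union, sf_union]
      ac_rfl
    have hcore := core (sf v' 𝒮₁) (sf v' 𝒮₂) (sf v' 𝒯₁) (sf v' 𝒯₂) t hA hB
    rw [sf_decomp v 𝒮, sf_decomp v 𝒯, sf_decomp v (Set.image2 (· ∪ ·) 𝒮 𝒯)]
    rw [← h𝒮₁, ← h𝒮₂, ← h𝒯₁, ← h𝒯₂, ← ht, hcore]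
    congr 2
    · rw [fam_last 𝒮 𝒯, ← h𝒮₁, ← h𝒮₂, ← h𝒯₁, ← h𝒯₂, sf_union, sf_union,
        IH v' hv'mem hregv' 𝒮₁ 𝒯₁, IH v' hv'mem hregv' 𝒮₁ 𝒯₂,
        IH v' hv'mem hregv' 𝒮₂ 𝒯₁]
    · rw [fam_not_last 𝒮 𝒯, ← h𝒮₂, ← h𝒯₂, IH v' hv'mem hregv' 𝒮₂ 𝒯₂]

end LemC

end SFM

/-- Let `R` be a local (Noetherian) commutative ring and `f₁,…,fₙ` a regular sequence in
its maximal ideal.  If `I₁, I₂, J₁, J₂` are ideals generated by square-free monomials in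
`f₁,…,f_{n-1}`, then
`(I₁fₙ + I₂) ⊓ (J₁fₙ + J₂) = (I₁∩J₁ + I₁∩J₂ + I₂∩J₁)fₙ + I₂∩J₂`. -/
theorem stmt7 {R : Type*} [CommRing R] [IsLocalRing R] [IsNoetherianRing R] {n : ℕ}
    (f : Fin (n + 1) → R) (hmem : ∀ i, f i ∈ IsLocalRing.maximalIdeal R)
    (hreg : RingTheory.Sequence.IsRegular R (List.ofFn f))
    (I₁ I₂ J₁ J₂ : Ideal R)
    (hI₁ : IsSquareFreeMonomialIdeal (fun i : Fin n => f i.castSucc) I₁)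
    (hI₂ : IsSquareFreeMonomialIdeal (fun i : Fin n => f i.castSucc) I₂)
    (hJ₁ : IsSquareFreeMonomialIdeal (fun i : Fin n => f i.castSucc) J₁)
    (hJ₂ : IsSquareFreeMonomialIdeal (fun i : Fin n => f i.castSucc) J₂) :
    (I₁ * Ideal.span {f (Fin.last n)} + I₂) ⊓ (J₁ * Ideal.span {f (Fin.last n)} + J₂) =
      (I₁ ⊓ J₁ + I₁ ⊓ J₂ + I₂ ⊓ J₁) * Ideal.span {f (Fin.last n)} + I₂ ⊓ J₂ := by
  classical
  set v' : Fin n → R := fun i => f i.castSucc with hv'def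
  set a := f (Fin.last n) with ha_def
  obtain ⟨𝒜, hI₁⟩ := hI₁
  obtain ⟨ℬ, hI₂⟩ := hI₂
  obtain ⟨𝒞, hJ₁⟩ := hJ₁
  obtain ⟨𝒟, hJ₂⟩ := hJ₂
  have hI₁' : I₁ = SFM.sf v' 𝒜 := hI₁
  have hI₂' : I₂ = SFM.sf v' ℬ := hI₂
  have hJ₁' : J₁ = SFM.sf v' 𝒞 := hJ₁
  have hJ₂' : J₂ = SFM.sf v' 𝒟 := hJ₂
  have hv'mem : ∀ i, v' i ∈ IsLocalRing.maximalIdeal R := fun i => hmem i.castSucc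
  have hofn : List.ofFn f = List.ofFn v' ++ [a] := by
    rw [List.ofFn_succ', List.concat_eq_append]
  have hwreg : RingTheory.Sequence.IsWeaklyRegular R (List.ofFn f) :=
    hreg.toIsWeaklyRegular
  have hregv' : RingTheory.Sequence.IsWeaklyRegular R (List.ofFn v') :=
    ((RingTheory.Sequence.isWeaklyRegular_append_iff R _ [a]).mp (hofn ▸ hwreg)).1
  have hA : ∀ x, x * a ∈ I₂ ⊔ J₂ → x ∈ I₂ ⊔ J₂ := by
    intro x hx
    rw [hI₂', hJ₂'] at hx ⊢
    have h0 : SFM.sf v' ℬ ⊔ SFM.sf v' 𝒟 = (⊥ : Ideal R) ⊔ SFM.sf v' (ℬ ∪ 𝒟) := by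
      rw [SFM.sf_union, bot_sup_eq]
    rw [h0] at hx ⊢
    exact SFM.lemA n ⊥ v' a hv'mem (hmem _) (by rw [← hofn]; exact SFM.wreg_bot hwreg) _ x hx
  have hB : (I₁ ⊔ I₂) ⊓ (J₁ ⊔ J₂) =
      ((I₁ ⊓ J₁ ⊔ I₁ ⊓ J₂) ⊔ I₂ ⊓ J₁) ⊔ I₂ ⊓ J₂ := by
    rw [hI₁', hI₂', hJ₁', hJ₂', ← SFM.sf_union, ← SFM.sf_union,
      SFM.lemC n v' hv'mem hregv',
      SFM.lemC n v' hv'mem hregv' 𝒜 𝒞, SFM.lemC n v' hv'mem hregv' 𝒜 𝒟,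
      SFM.lemC n v' hv'mem hregv' ℬ 𝒞, SFM.lemC n v' hv'mem hregv' ℬ 𝒟,
      Set.image2_union_left, Set.image2_union_right, Set.image2_union_right,
      SFM.sf_union, SFM.sf_union, SFM.sf_union]
    ac_rfl
  have hcore := SFM.core I₁ I₂ J₁ J₂ a hA hB
  simpa only [Submodule.add_eq_sup] using hcore
end

section
/- Let $R$ be a local commutative ring and $f_1, \ldots, f_n$ a regular sequence in the maximal ideal. Then the lattice of ideals generated by the principal ideals $(f_1), \ldots, (f_n)$ under ideal sums and intersections is distributive: for any $L_1, L_2, L_3$ in this lattice, $L_1 \cap (L_2 + L_3) = (L_1 \cap L_2) + (L_1 \cap L_3)$. -/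
set_option linter.unusedSectionVars false
set_option linter.unnecessarySimpa false
set_option maxHeartbeats 1600000
universe u

/-- Membership in the lattice of ideals generated by a set `S` of ideals: the smallest
collection of ideals containing `S` and closed under ideal sum and ideal intersection. -/
inductive IdealLattice {R : Type*} [CommRing R] (S : Set (Ideal R)) : Ideal R → Prop
  | base : ∀ I ∈ S, IdealLattice S I
  | sup : ∀ {I J}, IdealLattice S I → IdealLattice S J → IdealLattice S (I + J)
  | inf : ∀ {I J}, IdealLattice S I → IdealLattice S J → IdealLattice S (I ⊓ J)

section
variable {R : Type*} [CommRing R] {ι : Type*} [DecidableEq ι]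

/-- squarefree monomial -/
def mon (f : ι → R) (A : Finset ι) : R := ∏ i ∈ A, f i

/-- monomial ideal -/
def mideal (f : ι → R) (T : Finset (Finset ι)) : Ideal R :=
  T.sup fun A => Ideal.span {mon f A}

lemma span_le_mideal (f : ι → R) {T : Finset (Finset ι)} {A : Finset ι} (hA : A ∈ T) :
    Ideal.span {mon f A} ≤ mideal f T := Finset.le_sup (f := fun A => Ideal.span {mon f A}) hA

lemma mon_mem_mideal (f : ι → R) {T : Finset (Finset ι)} {A : Finset ι} (hA : A ∈ T) :
    mon f A ∈ mideal f T := span_le_mideal f hA (Ideal.mem_span_singleton_self _)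

lemma mideal_mono (f : ι → R) {S T : Finset (Finset ι)} (h : S ⊆ T) :
    mideal f S ≤ mideal f T := Finset.sup_mono h

lemma mideal_union (f : ι → R) (S T : Finset (Finset ι)) :
    mideal f (S ∪ T) = mideal f S ⊔ mideal f T := Finset.sup_union

lemma mon_mem_span_of_subset (f : ι → R) {A B : Finset ι} (h : A ⊆ B) :
    mon f B ∈ Ideal.span {mon f A} := by
  rw [Ideal.mem_span_singleton]
  exact ⟨∏ i ∈ B \ A, f i, by rw [mon, mon, ← Finset.prod_sdiff h]; ring⟩

lemma mem_mideal_iff {f : ι → R} {T : Finset (Finset ι)} {x : R} :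
    x ∈ mideal f T ↔ ∃ c : Finset ι → R, x = ∑ A ∈ T, c A * mon f A := by
  classical
  induction T using Finset.induction_on generalizing x with
  | empty => simp [mideal]
  | @insert A T hA ih =>
    rw [mideal, Finset.sup_insert, ← mideal]
    constructor
    · intro hx
      obtain ⟨y, hy, z, hz, rfl⟩ := Submodule.mem_sup.mp hx
      obtain ⟨a, rfl⟩ := Ideal.mem_span_singleton'.mp hy
      obtain ⟨c, rfl⟩ := ih.mp hz
      refine ⟨Function.update c A a, ?_⟩
      rw [Finset.sum_insert hA, Function.update_self]
      congr 1
      exact Finset.sum_congr rfl fun B hB => by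
        rw [Function.update_of_ne (by rintro rfl; exact hA hB)]
    · rintro ⟨c, rfl⟩
      rw [Finset.sum_insert hA]
      exact Submodule.add_mem_sup (Ideal.mem_span_singleton'.mpr ⟨c A, rfl⟩)
        (ih.mpr ⟨c, rfl⟩)

lemma sum_mem_mideal {f : ι → R} {T : Finset (Finset ι)} (c : Finset ι → R) :
    ∑ A ∈ T, c A * mon f A ∈ mideal f T :=
  mem_mideal_iff.mpr ⟨c, rfl⟩

end

section
variable {R : Type*} [CommRing R] {ι : Type*} [DecidableEq ι]
variable {κ : Type*} [DecidableEq κ]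

lemma mon_reindex (f : ι → R) (e : κ → ι) (he : Function.Injective e)
    {B : Finset ι} (hB : ∀ i ∈ B, ∃ k, e k = i) :
    mon f B = mon (f ∘ e) (B.preimage e he.injOn) := by
  rw [mon, mon, eq_comm]
  exact Finset.prod_preimage e B _ f (fun i hi hr => absurd (hB i hi) (by
    simpa [Set.range, eq_comm] using hr))

lemma mideal_reindex (f : ι → R) (e : κ → ι) (he : Function.Injective e)
    {T : Finset (Finset ι)} (hT : ∀ B ∈ T, ∀ i ∈ B, ∃ k, e k = i) :
    mideal f T = mideal (f ∘ e) (T.image fun B => B.preimage e he.injOn) := by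
  rw [mideal, mideal, Finset.sup_image]
  exact Finset.sup_congr rfl fun B hB => by
    rw [Function.comp_apply, ← mon_reindex f e he (hT B hB)]
end

open Pointwise RingTheory.Sequence in
lemma quot_transfer {R : Type*} [CommRing R] (a : R) (l : List R)
    (h : IsWeaklyRegular R (a :: l)) :
    IsWeaklyRegular (R ⧸ Ideal.span {a}) (l.map (Ideal.Quotient.mk (Ideal.span {a}))) := by
  rw [isWeaklyRegular_cons_iff] at h
  have hst : (a • ⊤ : Submodule R R) = (Ideal.span {a} : Ideal R) := by
    rw [← Submodule.singleton_set_smul, Submodule.set_smul_top_eq_span]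
  have e : QuotSMulTop a R ≃ₗ[R] R ⧸ Ideal.span {a} := Submodule.quotEquivOfEq _ _ hst
  have h2 : IsWeaklyRegular (R ⧸ Ideal.span {a}) l := (e.isWeaklyRegular_congr l).mp h.2
  have := isWeaklyRegular_map_algebraMap_iff (R := R) (S := R ⧸ Ideal.span {a})
    (M := R ⧸ Ideal.span {a}) l
  rw [Ideal.Quotient.algebraMap_eq] at this
  exact this.mpr h2

lemma quot_localring {R : Type*} [CommRing R] [IsLocalRing R] {a : R}
    (ha : a ∈ IsLocalRing.maximalIdeal R) : IsLocalRing (R ⧸ Ideal.span {a}) :=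
  have : Ideal.span {a} ≠ ⊤ := by
    intro h
    exact IsLocalRing.maximalIdeal.isMaximal R |>.ne_top (top_le_iff.mp
      (h ▸ Ideal.span_le.mpr (by simpa using ha)))
  have : Nontrivial (R ⧸ Ideal.span {a}) := Ideal.Quotient.nontrivial_iff.mpr this
  IsLocalRing.of_surjective' _ Ideal.Quotient.mk_surjective

lemma quot_mem_max {R : Type*} [CommRing R] [IsLocalRing R] {a : R}
    (ha : a ∈ IsLocalRing.maximalIdeal R) {y : R} (hy : y ∈ IsLocalRing.maximalIdeal R) :
    haveI := quot_localring ha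
    Ideal.Quotient.mk (Ideal.span {a}) y ∈
      IsLocalRing.maximalIdeal (R ⧸ Ideal.span {a}) := by
  haveI := quot_localring ha
  rw [IsLocalRing.mem_maximalIdeal, mem_nonunits_iff]
  intro hu
  obtain ⟨u, hu⟩ := hu
  obtain ⟨z, hz⟩ := Ideal.Quotient.mk_surjective ((u⁻¹ : (R ⧸ Ideal.span {a})ˣ) : R ⧸ Ideal.span {a})
  have : Ideal.Quotient.mk (Ideal.span {a}) (y * z) = 1 := by
    rw [map_mul, ← hu, hz]
    exact u.mul_inv
  rw [← map_one (Ideal.Quotient.mk (Ideal.span {a})), Ideal.Quotient.mk_eq_mk_iff_sub_mem] at this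
  have hmem : y * z - 1 ∈ IsLocalRing.maximalIdeal R :=
    Ideal.span_le.mpr (by simpa using ha) this
  have h1 : (1 : R) ∈ IsLocalRing.maximalIdeal R := by
    have := Ideal.sub_mem _ (Ideal.mul_mem_right z _ hy) hmem
    simpa using this
  exact IsLocalRing.maximalIdeal.isMaximal R |>.ne_top ((Ideal.eq_top_iff_one _).mpr h1)

lemma ofFn_perm {α : Type*} {n : ℕ} (f : Fin n → α) (σ : Equiv.Perm (Fin n)) :
    (List.ofFn (f ∘ σ)).Perm (List.ofFn f) := by
  rw [List.ofFn_eq_map, List.ofFn_eq_map, ← List.map_map]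
  apply List.Perm.map
  apply List.perm_of_nodup_nodup_toFinset_eq
  · exact (List.nodup_finRange n).map σ.injective
  · exact List.nodup_finRange n
  · ext x
    simp only [List.mem_toFinset, List.mem_map, List.mem_finRange, true_and, iff_true]
    exact ⟨σ.symm x, by simp⟩

open RingTheory.Sequence in
theorem M0 : ∀ (n : ℕ) (R : Type u) [CommRing R] [IsLocalRing R] [IsNoetherianRing R]
    (f : Fin n → R) (r : R), (∀ i, f i ∈ IsLocalRing.maximalIdeal R) →
    (r ∈ IsLocalRing.maximalIdeal R) →
    IsWeaklyRegular R (List.ofFn f ++ [r]) →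
    ∀ (T : Finset (Finset (Fin n))) (x : R), x * r ∈ mideal f T → x ∈ mideal f T := by
  intro n
  induction n with
  | zero =>
    intro R _ _ _ f r hmem hr hreg T x hx
    by_cases h0 : (∅ : Finset (Fin 0)) ∈ T
    · exact span_le_mideal f h0 (Ideal.mem_span_singleton.mpr (by simp [mon]))
    · have hT : T = ∅ := by
        apply Finset.eq_empty_iff_forall_notMem.mpr
        intro B hB
        have hBe : B = ∅ := Finset.eq_empty_of_isEmpty B
        exact h0 (hBe ▸ hB)
      subst hT
      rw [mideal, Finset.sup_empty] at hx ⊢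
      have hr0 : x * r = 0 := by simpa using hx
      have h1 : IsWeaklyRegular R [r] := by simpa using hreg
      have hsreg : IsSMulRegular R r := (isWeaklyRegular_singleton_iff R r).mp h1
      have h2 : r • x = r • (0 : R) := by
        rw [smul_eq_mul, smul_eq_mul, mul_zero, mul_comm, hr0]
      simpa using hsreg h2
  | succ n ih =>
    intro R _ _ _ f r hmem hr hreg T x hx
    classical
    set a := f (Fin.last n) with ha
    set g : Fin n → R := f ∘ Fin.castSucc with hg
    have hsplit : List.ofFn f = List.ofFn g ++ [a] := by
      rw [List.ofFn_succ', List.concat_eq_append]; rfl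
    have reg1 : IsWeaklyRegular R (List.ofFn f) :=
      ((isWeaklyRegular_append_iff R (List.ofFn f) [r]).mp hreg).1
    have regGA : IsWeaklyRegular R (List.ofFn g ++ [a]) := hsplit ▸ reg1
    have permGR : (List.ofFn f ++ [r]).Perm (a :: (List.ofFn g ++ [r])) := by
      rw [hsplit, List.append_assoc]
      exact List.perm_middle
    have hmemlist : ∀ y ∈ List.ofFn f ++ [r], y ∈ IsLocalRing.maximalIdeal R := by
      intro y hy
      rcases List.mem_append.mp hy with h | h
      · obtain ⟨i, rfl⟩ := List.mem_ofFn.mp h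
        exact hmem i
      · rw [List.mem_singleton.mp h]; exact hr
    have regAGR : IsWeaklyRegular R (a :: (List.ofFn g ++ [r])) :=
      IsLocalRing.isWeaklyRegular_of_perm_of_subset_maximalIdeal hreg permGR hmemlist
    have regGR : IsWeaklyRegular R (List.ofFn g ++ [r]) := by
      have p2 : (a :: (List.ofFn g ++ [r])).Perm ((List.ofFn g ++ [r]) ++ [a]) :=
        (List.perm_append_singleton a _).symm
      have := IsLocalRing.isWeaklyRegular_of_perm_of_subset_maximalIdeal regAGR p2
        (fun y hy => hmemlist y (permGR.symm.subset hy))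
      exact ((isWeaklyRegular_append_iff R (List.ofFn g ++ [r]) [a]).mp this).1
    -- quotient ring
    haveI hQloc : IsLocalRing (R ⧸ Ideal.span {a}) := quot_localring (hmem _)
    set π : R →+* R ⧸ Ideal.span {a} := Ideal.Quotient.mk (Ideal.span {a}) with hπ
    have regQ : IsWeaklyRegular (R ⧸ Ideal.span {a}) (List.ofFn (⇑π ∘ g) ++ [π r]) := by
      have := quot_transfer a _ regAGR
      rwa [List.map_append, List.map_ofFn] at this
    -- splitting of T
    set T₁ := T.filter (fun B => Fin.last n ∈ B) with hT₁
    set T₀ := T.filter (fun B => ¬ (Fin.last n ∈ B)) with hT₀def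
    have hT : T₁ ∪ T₀ = T := Finset.filter_union_filter_not_eq _ T
    have hT₀ : ∀ B ∈ T₀, Fin.last n ∉ B := fun B hB => (Finset.mem_filter.mp hB).2
    obtain ⟨c, hc⟩ := mem_mideal_iff.mp hx
    rw [← hT, Finset.sum_union (Finset.disjoint_filter_filter_not T T _)] at hc
    set u := ∑ B ∈ T₁, c B * mon f (B.erase (Fin.last n)) with hu
    set v := ∑ B ∈ T₀, c B * mon f B with hv
    have hxr : x * r = a * u + v := by
      rw [hc]
      congr 1
      rw [hu, Finset.mul_sum]
      apply Finset.sum_congr rfl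
      intro B hB
      have hBl : Fin.last n ∈ B := (Finset.mem_filter.mp hB).2
      rw [mon, mon, ← Finset.mul_prod_erase B f hBl]
      ring
    -- reindexing along castSucc
    have hcs : Function.Injective (Fin.castSucc : Fin n → Fin (n + 1)) :=
      Fin.castSucc_injective n
    set p : Finset (Fin (n + 1)) → Finset (Fin n) :=
      fun B => B.preimage Fin.castSucc hcs.injOn with hp
    have hpre : ∀ B : Finset (Fin (n + 1)), Fin.last n ∉ B →
        ∀ i ∈ B, ∃ k : Fin n, Fin.castSucc k = i := by
      intro B hB i hi
      exact Fin.exists_castSucc_eq.mpr (by rintro rfl; exact hB hi)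
    have hmon : ∀ B : Finset (Fin (n + 1)), Fin.last n ∉ B → mon f B = mon g (p B) :=
      fun B hB => mon_reindex f _ hcs (hpre B hB)
    have hmid : ∀ (W : Finset (Finset (Fin (n + 1)))), (∀ B ∈ W, Fin.last n ∉ B) →
        mideal f W = mideal g (W.image p) :=
      fun W hW => mideal_reindex f _ hcs (fun B hB => hpre B (hW B hB))
    -- Step A : in the quotient
    have hπa : π a = 0 := Ideal.Quotient.eq_zero_iff_mem.mpr (Ideal.mem_span_singleton_self a)
    have hstepA : π x * π r ∈ mideal (⇑π ∘ g) (T₀.image p) := by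
      have heq : π x * π r = ∑ B ∈ T₀, π (c B) * mon (⇑π ∘ g) (p B) := by
        rw [← map_mul, hxr, map_add, map_mul, hπa, zero_mul, zero_add, hv, map_sum]
        apply Finset.sum_congr rfl
        intro B hB
        rw [map_mul, hmon B (hT₀ B hB), mon, mon, map_prod]
        rfl
      rw [heq]
      exact Ideal.sum_mem _ fun B hB =>
        Ideal.mul_mem_left _ _ (mon_mem_mideal _ (Finset.mem_image_of_mem p hB))
    have hstep1 : π x ∈ mideal (⇑π ∘ g) (T₀.image p) :=
      ih (R ⧸ Ideal.span {a}) (⇑π ∘ g) (π r)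
        (fun i => quot_mem_max (hmem _) (hmem _)) (quot_mem_max (hmem _) hr)
        regQ _ _ hstepA
    -- Step B : pull back
    obtain ⟨d, hd⟩ := mem_mideal_iff.mp hstep1
    choose c' hc' using fun B : Finset (Fin n) =>
      Ideal.Quotient.mk_surjective (I := Ideal.span {a}) (d B)
    set v₀ := ∑ B ∈ T₀.image p, c' B * mon g B with hv₀
    have hπv₀ : π x = π v₀ := by
      rw [hd, hv₀, map_sum]
      apply Finset.sum_congr rfl
      intro B hB
      rw [map_mul, hc', mon, mon, map_prod]
      rfl
    have hxa : x - v₀ ∈ Ideal.span {a} :=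
      (Ideal.Quotient.mk_eq_mk_iff_sub_mem x v₀).mp hπv₀
    obtain ⟨w, hw⟩ := Ideal.mem_span_singleton'.mp hxa
    have hv₀mem : v₀ ∈ mideal f T₀ := by
      rw [hv₀]
      apply Ideal.sum_mem
      intro B hB
      obtain ⟨B', hB', rfl⟩ := Finset.mem_image.mp hB
      rw [← hmon B' (hT₀ B' hB')]
      exact Ideal.mul_mem_left _ _ (mon_mem_mideal f hB')
    have hxeq : x = v₀ + w * a := by linear_combination -hw
    -- Step C
    have hvmem : v ∈ mideal f T₀ := by rw [hv]; exact sum_mem_mideal c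
    have h3 : (w * r - u) * a ∈ mideal f T₀ := by
      have e : (v₀ + w * a) * r = a * u + v := by rw [← hxeq]; exact hxr
      have heq : (w * r - u) * a = v - v₀ * r := by linear_combination e
      rw [heq]
      exact Ideal.sub_mem _ hvmem (Ideal.mul_mem_right _ _ hv₀mem)
    have h4 : w * r - u ∈ mideal f T₀ := by
      rw [hmid T₀ hT₀] at h3 ⊢
      exact ih R g a (fun i => hmem _) (hmem _) regGA _ _ h3
    set W := T₀ ∪ T₁.image (fun B => B.erase (Fin.last n)) with hWdef
    have hWavoid : ∀ B ∈ W, Fin.last n ∉ B := by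
      intro B hB
      rcases Finset.mem_union.mp hB with h | h
      · exact hT₀ B h
      · obtain ⟨B', _, rfl⟩ := Finset.mem_image.mp h
        exact Finset.notMem_erase _ _
    have humem : u ∈ mideal f W := by
      rw [hu]
      apply Ideal.sum_mem
      intro B hB
      exact Ideal.mul_mem_left _ _
        (mon_mem_mideal f (Finset.mem_union_right _ (Finset.mem_image_of_mem _ hB)))
    have h5 : w * r ∈ mideal f W := by
      have heq : w * r = (w * r - u) + u := by ring
      rw [heq]
      exact Ideal.add_mem _ (mideal_mono f Finset.subset_union_left h4) humem
    have h6 : w ∈ mideal f W := by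
      rw [hmid W hWavoid] at h5 ⊢
      exact ih R g r (fun i => hmem _) hr regGR _ _ h5
    have h7 : w * a ∈ mideal f T := by
      obtain ⟨e, he⟩ := mem_mideal_iff.mp h6
      rw [he, Finset.sum_mul]
      apply Ideal.sum_mem
      intro B hB
      rcases Finset.mem_union.mp hB with h | h
      · exact Ideal.mul_mem_right _ _
          (Ideal.mul_mem_left _ _ (mon_mem_mideal f (Finset.filter_subset _ _ h)))
      · obtain ⟨B', hB', rfl⟩ := Finset.mem_image.mp h
        have hBl : Fin.last n ∈ B' := (Finset.mem_filter.mp hB').2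
        have heq : e (B'.erase (Fin.last n)) * mon f (B'.erase (Fin.last n)) * a
            = e (B'.erase (Fin.last n)) * mon f B' := by
          rw [mon, mon, ← Finset.mul_prod_erase B' f hBl]
          ring
        rw [heq]
        exact Ideal.mul_mem_left _ _ (mon_mem_mideal f (Finset.filter_subset _ _ hB'))
    rw [hxeq]
    exact Ideal.add_mem _ (mideal_mono f (Finset.filter_subset _ _) hv₀mem) h7

section Main
open RingTheory.Sequence

variable {R : Type u} [CommRing R] [IsLocalRing R] [IsNoetherianRing R]
  {N : ℕ} {f : Fin N → R} (hmem : ∀ i, f i ∈ IsLocalRing.maximalIdeal R)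
  (hwreg : IsWeaklyRegular R (List.ofFn f))

include hmem hwreg

lemma Kavoid (i : Fin N) (T : Finset (Finset (Fin N))) (hT : ∀ B ∈ T, i ∉ B)
    (x : R) (hx : x * f i ∈ mideal f T) : x ∈ mideal f T := by
  classical
  cases N with
  | zero => exact i.elim0
  | succ n =>
    set σ : Equiv.Perm (Fin (n + 1)) := Equiv.swap i (Fin.last n) with hσ
    set e : Fin n → Fin (n + 1) := fun k => σ (Fin.castSucc k) with he
    have hei : Function.Injective e := σ.injective.comp (Fin.castSucc_injective n)
    have hrange : ∀ B ∈ T, ∀ b ∈ B, ∃ k, e k = b := by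
      intro B hB b hb
      have hbi : b ≠ i := by rintro rfl; exact (hT B hB) hb
      have hσb : σ b ≠ Fin.last n := by
        intro h
        apply hbi
        have := congrArg σ h
        rw [Equiv.swap_apply_self, hσ, Equiv.swap_apply_right] at this
        exact this
      obtain ⟨k, hk⟩ := Fin.exists_castSucc_eq.mpr hσb
      exact ⟨k, by rw [he]; simp only [hk]; exact Equiv.swap_apply_self _ _ _⟩
    have hmid : mideal f T = mideal (f ∘ e)
        (T.image fun B => B.preimage e hei.injOn) :=
      mideal_reindex f e hei hrange
    have hlist : List.ofFn (f ∘ e) ++ [f i] = List.ofFn (f ∘ σ) := by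
      have h1 : (f ∘ σ) (Fin.last n) = f i := by
        rw [Function.comp_apply, hσ, Equiv.swap_apply_right]
      rw [List.ofFn_succ' (f ∘ σ), List.concat_eq_append, h1]
      rfl
    have hregσ : IsWeaklyRegular R (List.ofFn (f ∘ e) ++ [f i]) := by
      rw [hlist]
      refine IsLocalRing.isWeaklyRegular_of_perm_of_subset_maximalIdeal hwreg
        (ofFn_perm f σ).symm ?_
      intro y hy
      obtain ⟨j, rfl⟩ := List.mem_ofFn.mp hy
      exact hmem j
    rw [hmid] at hx ⊢
    exact M0 n R (f ∘ e) (f i) (fun k => hmem _) (hmem i) hregσ _ x hx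

lemma K_colon (i : Fin N) (T : Finset (Finset (Fin N))) (x : R)
    (hx : x * f i ∈ mideal f T) :
    x ∈ mideal f (T.image fun B => B.erase i) := by
  classical
  set T₁ := T.filter (fun B => i ∈ B) with hT₁
  set T₀ := T.filter (fun B => ¬ (i ∈ B)) with hT₀def
  have hT : T₁ ∪ T₀ = T := Finset.filter_union_filter_not_eq _ T
  have hT₀ : ∀ B ∈ T₀, i ∉ B := fun B hB => (Finset.mem_filter.mp hB).2
  obtain ⟨c, hc⟩ := mem_mideal_iff.mp hx
  rw [← hT, Finset.sum_union (Finset.disjoint_filter_filter_not T T _)] at hc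
  set u := ∑ B ∈ T₁, c B * mon f (B.erase i) with hu
  set v := ∑ B ∈ T₀, c B * mon f B with hv
  have hxr : x * f i = f i * u + v := by
    rw [hc]
    congr 1
    rw [hu, Finset.mul_sum]
    apply Finset.sum_congr rfl
    intro B hB
    have hBl : i ∈ B := (Finset.mem_filter.mp hB).2
    rw [mon, mon, ← Finset.mul_prod_erase B f hBl]
    ring
  set W := T₀ ∪ T₁.image (fun B => B.erase i) with hWdef
  have hWavoid : ∀ B ∈ W, i ∉ B := by
    intro B hB
    rcases Finset.mem_union.mp hB with h | h
    · exact hT₀ B h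
    · obtain ⟨B', _, rfl⟩ := Finset.mem_image.mp h
      exact Finset.notMem_erase _ _
  have humem : u ∈ mideal f W := by
    rw [hu]
    exact Ideal.sum_mem _ fun B hB => Ideal.mul_mem_left _ _
      (mon_mem_mideal f (Finset.mem_union_right _ (Finset.mem_image_of_mem _ hB)))
  have h1 : (x - u) * f i ∈ mideal f W := by
    have heq : (x - u) * f i = v := by linear_combination hxr
    rw [heq]
    exact mideal_mono f Finset.subset_union_left (by rw [hv]; exact sum_mem_mideal c)
  have h2 : x - u ∈ mideal f W := Kavoid hmem hwreg i W hWavoid _ h1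
  have h3 : x ∈ mideal f W := by
    have : x = (x - u) + u := by ring
    rw [this]; exact Ideal.add_mem _ h2 humem
  refine mideal_mono f ?_ h3
  apply Finset.union_subset
  · intro B hB
    have : B.erase i = B := Finset.erase_eq_of_notMem (hT₀ B hB)
    exact this ▸ Finset.mem_image_of_mem _ (Finset.filter_subset _ _ hB)
  · exact Finset.image_subset_image (Finset.filter_subset _ _)

lemma K_mon (A : Finset (Fin N)) : ∀ (T : Finset (Finset (Fin N))) (x : R),
    x * mon f A ∈ mideal f T → x ∈ mideal f (T.image fun B => B \ A) := by
  classical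
  induction A using Finset.induction_on with
  | empty =>
    intro T x hx
    have h1 : (T.image fun B => B \ ∅) = T := by simp
    rw [h1]
    simpa [mon] using hx
  | @insert j A hj ih =>
    intro T x hx
    have heq : x * mon f (insert j A) = (x * mon f A) * f j := by
      rw [mon, mon, Finset.prod_insert hj]; ring
    rw [heq] at hx
    have h1 := K_colon hmem hwreg j T _ hx
    have h2 := ih _ _ h1
    rw [Finset.image_image] at h2
    have h3 : ((fun B => B \ A) ∘ fun B => B.erase j) = fun B => B \ insert j A := by
      funext B
      simp only [Function.comp_apply, Finset.erase_eq, Finset.insert_eq]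
      rw [sdiff_sdiff_left]
      rfl
    rwa [h3] at h2

/-- pairwise unions -/
def unio {N : ℕ} (S T : Finset (Finset (Fin N))) : Finset (Finset (Fin N)) :=
  (S ×ˢ T).image fun p => p.1 ∪ p.2

omit hmem hwreg in
lemma mideal_unio_le_left (S T : Finset (Finset (Fin N))) :
    mideal f (unio S T) ≤ mideal f S := by
  apply Finset.sup_le
  intro C hC
  obtain ⟨⟨A, B⟩, hp, rfl⟩ := Finset.mem_image.mp hC
  rw [Ideal.span_singleton_le_iff_mem]
  exact span_le_mideal f (Finset.mem_product.mp hp).1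
    (mon_mem_span_of_subset f Finset.subset_union_left)

omit hmem hwreg in
lemma mideal_unio_le_right (S T : Finset (Finset (Fin N))) :
    mideal f (unio S T) ≤ mideal f T := by
  apply Finset.sup_le
  intro C hC
  obtain ⟨⟨A, B⟩, hp, rfl⟩ := Finset.mem_image.mp hC
  rw [Ideal.span_singleton_le_iff_mem]
  exact span_le_mideal f (Finset.mem_product.mp hp).2
    (mon_mem_span_of_subset f Finset.subset_union_right)

lemma mideal_inf (S T : Finset (Finset (Fin N))) :
    mideal f S ⊓ mideal f T = mideal f (unio S T) := by
  classical
  apply le_antisymm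
  · suffices h : ∀ S : Finset (Finset (Fin N)), ∀ x : R,
        x ∈ mideal f S → x ∈ mideal f T → x ∈ mideal f (unio S T) by
      intro x hx
      exact h S x hx.1 hx.2
    intro S
    induction S using Finset.induction_on with
    | empty =>
      intro x hx _
      rw [mideal, Finset.sup_empty] at hx
      simp at hx; simp [hx]
    | @insert A S hA ih =>
      intro x hxS hxT
      rw [mideal, Finset.sup_insert, ← mideal] at hxS
      obtain ⟨z₁, hz₁, y, hy, rfl⟩ := Submodule.mem_sup.mp hxS
      obtain ⟨cA, rfl⟩ := Ideal.mem_span_singleton'.mp hz₁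
      set G := mideal f (unio (insert A S) T) with hG
      have hz₁TS : cA * mon f A ∈ mideal f (T ∪ S) := by
        have : cA * mon f A = (cA * mon f A + y) - y := by ring
        rw [this, mideal_union]
        exact Ideal.sub_mem _ (Submodule.mem_sup_left hxT) (Submodule.mem_sup_right hy)
      have hcA := K_mon hmem hwreg A (T ∪ S) cA hz₁TS
      have hz₁' : cA * mon f A ∈ G ⊔ mideal f S := by
        obtain ⟨d, hd⟩ := mem_mideal_iff.mp hcA
        rw [hd, Finset.sum_mul]
        apply Ideal.sum_mem
        intro C hC
        obtain ⟨B, hB, rfl⟩ := Finset.mem_image.mp hC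
        have hmm : mon f (B \ A) * mon f A = mon f (A ∪ B) := by
          rw [mon, mon, mon, ← Finset.prod_union Finset.sdiff_disjoint,
            Finset.union_comm, Finset.union_sdiff_self_eq_union]
        rw [mul_assoc, hmm]
        rcases Finset.mem_union.mp hB with h | h
        · refine Submodule.mem_sup_left (Ideal.mul_mem_left _ _ ?_)
          refine mon_mem_mideal f ?_
          exact Finset.mem_image.mpr ⟨(A, B), Finset.mem_product.mpr
            ⟨Finset.mem_insert_self _ _, h⟩, rfl⟩
        · refine Submodule.mem_sup_right (Ideal.mul_mem_left _ _ ?_)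
          exact span_le_mideal f h (mon_mem_span_of_subset f Finset.subset_union_right)
      obtain ⟨z₂, hz₂, z₃, hz₃, hz⟩ := Submodule.mem_sup.mp hz₁'
      have hx2 : cA * mon f A + y - z₂ ∈ mideal f S := by
        have : cA * mon f A + y - z₂ = z₃ + y := by rw [← hz]; ring
        rw [this]
        exact Ideal.add_mem _ hz₃ hy
      have hx2T : cA * mon f A + y - z₂ ∈ mideal f T :=
        Ideal.sub_mem _ hxT (mideal_unio_le_right _ _ hz₂)
      have := ih _ hx2 hx2T
      have hle : mideal f (unio S T) ≤ G := by
        apply mideal_mono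
        apply Finset.image_subset_image
        exact Finset.product_subset_product (Finset.subset_insert _ _) le_rfl
      have hfin : cA * mon f A + y = z₂ + (cA * mon f A + y - z₂) := by ring
      rw [hfin]
      exact Ideal.add_mem _ hz₂ (hle this)
  · exact le_inf (mideal_unio_le_left S T) (mideal_unio_le_right S T)

lemma lattice_rep (L : Ideal R)
    (h : IdealLattice {I | ∃ i : Fin N, I = Ideal.span {f i}} L) :
    ∃ U : Finset (Finset (Fin N)), L = mideal f U := by
  induction h with
  | base I hI =>
    obtain ⟨i, rfl⟩ := hI
    exact ⟨{{i}}, by simp [mideal, mon, Finset.sup_singleton]⟩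
  | sup h1 h2 ih1 ih2 =>
    obtain ⟨U₁, rfl⟩ := ih1
    obtain ⟨U₂, rfl⟩ := ih2
    exact ⟨U₁ ∪ U₂, by rw [mideal_union, Submodule.add_eq_sup]⟩
  | inf h1 h2 ih1 ih2 =>
    obtain ⟨U₁, rfl⟩ := ih1
    obtain ⟨U₂, rfl⟩ := ih2
    exact ⟨unio U₁ U₂, mideal_inf hmem hwreg U₁ U₂⟩

end Main

lemma unio_union_distrib {N : ℕ} (S T U : Finset (Finset (Fin N))) :
    unio S (T ∪ U) = unio S T ∪ unio S U := by
  classical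
  ext C
  simp only [unio, Finset.mem_image, Finset.mem_product, Finset.mem_union]
  constructor
  · rintro ⟨⟨A, B⟩, ⟨hA, hB | hB⟩, rfl⟩
    · exact Or.inl ⟨(A, B), ⟨hA, hB⟩, rfl⟩
    · exact Or.inr ⟨(A, B), ⟨hA, hB⟩, rfl⟩
  · rintro (⟨⟨A, B⟩, ⟨hA, hB⟩, rfl⟩ | ⟨⟨A, B⟩, ⟨hA, hB⟩, rfl⟩)
    · exact ⟨(A, B), ⟨hA, Or.inl hB⟩, rfl⟩
    · exact ⟨(A, B), ⟨hA, Or.inr hB⟩, rfl⟩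

/-- Let `R` be a local (Noetherian) commutative ring and `f₁,…,fₙ` a regular sequence in
its maximal ideal.  Then the lattice of ideals generated by the principal ideals
`(f₁),…,(fₙ)` under ideal sums and intersections is distributive:
`L₁ ∩ (L₂ + L₃) = (L₁ ∩ L₂) + (L₁ ∩ L₃)` for any three members. -/
theorem stmt8 {R : Type*} [CommRing R] [IsLocalRing R] [IsNoetherianRing R] {n : ℕ}
    (f : Fin n → R) (hmem : ∀ i, f i ∈ IsLocalRing.maximalIdeal R)
    (hreg : RingTheory.Sequence.IsRegular R (List.ofFn f))
    (L₁ L₂ L₃ : Ideal R)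
    (h₁ : IdealLattice {I | ∃ i : Fin n, I = Ideal.span {f i}} L₁)
    (h₂ : IdealLattice {I | ∃ i : Fin n, I = Ideal.span {f i}} L₂)
    (h₃ : IdealLattice {I | ∃ i : Fin n, I = Ideal.span {f i}} L₃) :
    L₁ ⊓ (L₂ + L₃) = (L₁ ⊓ L₂) + (L₁ ⊓ L₃) := by
  have hwreg := hreg.toIsWeaklyRegular
  obtain ⟨U₁, rfl⟩ := lattice_rep hmem hwreg L₁ h₁
  obtain ⟨U₂, rfl⟩ := lattice_rep hmem hwreg L₂ h₂
  obtain ⟨U₃, rfl⟩ := lattice_rep hmem hwreg L₃ h₃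
  rw [Submodule.add_eq_sup, Submodule.add_eq_sup, ← mideal_union,
    mideal_inf hmem hwreg, mideal_inf hmem hwreg, mideal_inf hmem hwreg,
    unio_union_distrib, mideal_union]
end
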